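/- arXiv:1912.10349 — 6 statements merged into one kernel-verified Lean document; each statement's English description precedes it below -/
import Mathlib

section
/- If G is a nontrivial connected graph, then 1 ≤ pd(G) ≤ rd(G) ≤ χ'(G) ≤ Δ(G)+1, where pd is the proper disconnection number, rd the rainbow disconnection number, χ' the chromatic index, and Δ the maximum degree. -/
/-!
A rainbow cut is proper, and in a proper edge colouring the edges at a vertex `x` form a rainbow
cut separating `x` from every other vertex; this gives `pd ≤ rd ≤ χ'`, and `1 ≤ pd` because a
connected nontrivial graph has an edge. The bound `χ' ≤ Δ + 1` is Vizing's theorem, proved by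
induction on the number of edges. To colour a last edge `x y₀`, take a maximal fan `y₀, …, y_l`
at `x` (the colour of `x y_{i+1}` is missing at `y_i`), a colour `α` missing at `y_l` and `β`
missing at `x`. If `α` is also missing at `x`, rotate the whole fan and colour `x y_l` with `α`.
Otherwise, by maximality, `α` is the colour of some `x y_{m+1}`. The `α`/`β`-chains avoiding `x`
are paths, so `y_m` is joined to at most one of `y_{m+1}` and `y_l`; rotating the fan up to the
other one and interchanging `α` and `β` on its Kempe chain frees the uncoloured edge for `β`.
-/

open SimpleGraph

variable {V : Type*}

/-- Two edges are adjacent: distinct and sharing an endpoint. -/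
def EdgesAdj (e₁ e₂ : Sym2 V) : Prop := e₁ ≠ e₂ ∧ ∃ v, v ∈ e₁ ∧ v ∈ e₂

/-- `F` is an edge-cut of `G` separating `x` and `y`. -/
def IsSepCut (G : SimpleGraph V) (F : Set (Sym2 V)) (x y : V) : Prop :=
  F ⊆ G.edgeSet ∧ ¬ (G.deleteEdges F).Reachable x y

/-- `F` is a proper edge-cut (w.r.t. edge-coloring `c`) separating `x` and `y`. -/
def IsProperSepCut (G : SimpleGraph V) (c : Sym2 V → ℕ) (F : Set (Sym2 V)) (x y : V) : Prop :=
  IsSepCut G F x y ∧ ∀ e₁ ∈ F, ∀ e₂ ∈ F, EdgesAdj e₁ e₂ → c e₁ ≠ c e₂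

/-- `F` is a rainbow edge-cut separating `x` and `y`. -/
def IsRainbowSepCut (G : SimpleGraph V) (c : Sym2 V → ℕ) (F : Set (Sym2 V)) (x y : V) : Prop :=
  IsSepCut G F x y ∧ Set.InjOn c F

/-- `F` is a matching cut separating `x` and `y`. -/
def IsMatchingSepCut (G : SimpleGraph V) (F : Set (Sym2 V)) (x y : V) : Prop :=
  IsSepCut G F x y ∧ ∀ e₁ ∈ F, ∀ e₂ ∈ F, ¬ EdgesAdj e₁ e₂

/-- The proper disconnection number. -/
noncomputable def pd (G : SimpleGraph V) : ℕ :=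
  sInf {k | ∃ c : Sym2 V → ℕ, (∀ e ∈ G.edgeSet, c e < k) ∧
    ∀ x y : V, x ≠ y → ∃ F, IsProperSepCut G c F x y}

/-- The rainbow disconnection number. -/
noncomputable def rd (G : SimpleGraph V) : ℕ :=
  sInf {k | ∃ c : Sym2 V → ℕ, (∀ e ∈ G.edgeSet, c e < k) ∧
    ∀ x y : V, x ≠ y → ∃ F, IsRainbowSepCut G c F x y}

/-- The chromatic index. -/
noncomputable def chromIndex (G : SimpleGraph V) : ℕ :=
  sInf {k | ∃ c : Sym2 V → ℕ, (∀ e ∈ G.edgeSet, c e < k) ∧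
    ∀ e₁ ∈ G.edgeSet, ∀ e₂ ∈ G.edgeSet, EdgesAdj e₁ e₂ → c e₁ ≠ c e₂}

structure IsProperEdgeColoring (H : SimpleGraph V) (k : ℕ) (c : Sym2 V → ℕ) : Prop where
  lt : ∀ ⦃u v⦄, H.Adj u v → c s(u, v) < k
  ne : ∀ ⦃v u w⦄, H.Adj v u → H.Adj v w → u ≠ w → c s(v, u) ≠ c s(v, w)

def IsMissingAt (H : SimpleGraph V) (c : Sym2 V → ℕ) (v : V) (a : ℕ) : Prop :=
  ∀ ⦃w⦄, H.Adj v w → c s(v, w) ≠ a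

section Coloring

variable {H H' : SimpleGraph V} {c : Sym2 V → ℕ} {k : ℕ} {u v x y z : V} {a : ℕ}

lemma IsProperEdgeColoring.lt_and_ne_of_edgesAdj (hc : IsProperEdgeColoring H k c) :
    (∀ e ∈ H.edgeSet, c e < k) ∧
      ∀ e₁ ∈ H.edgeSet, ∀ e₂ ∈ H.edgeSet, EdgesAdj e₁ e₂ → c e₁ ≠ c e₂ := by
  refine ⟨fun e he => ?_, fun e₁ he₁ e₂ he₂ ⟨hne, w, hw₁, hw₂⟩ => ?_⟩
  · induction e using Sym2.ind with | _ u v => exact hc.lt he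
  · obtain ⟨u, rfl⟩ := Sym2.mem_iff_exists.1 hw₁
    obtain ⟨u', rfl⟩ := Sym2.mem_iff_exists.1 hw₂
    exact hc.ne he₁ he₂ (fun h => hne (h ▸ rfl))

lemma IsProperEdgeColoring.mono (hc : IsProperEdgeColoring H k c) (hle : H' ≤ H) :
    IsProperEdgeColoring H' k c :=
  ⟨fun _ _ h => hc.lt (hle h), fun _ _ _ hu hw => hc.ne (hle hu) (hle hw)⟩

lemma IsMissingAt.mono (hv : IsMissingAt H c v a) (hle : H' ≤ H) : IsMissingAt H' c v a :=
  fun _ h => hv (hle h)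

lemma exists_isMissingAt [Finite V] (hv : (H.neighborSet v).ncard < k) :
    ∃ a < k, IsMissingAt H c v a := by
  by_contra! h
  have hsub : Set.Iio k ⊆ (fun w => c s(v, w)) '' H.neighborSet v := fun a ha => by
    obtain ⟨w, hw, hwa⟩ := not_forall₂.1 (h a ha)
    exact ⟨w, hw, not_not.1 hwa⟩
  have := (Set.ncard_le_ncard hsub).trans Set.ncard_image_le
  simp only [Set.ncard_Iio_nat] at this
  omega

lemma IsProperEdgeColoring.update [DecidableEq (Sym2 V)]
    (hc : IsProperEdgeColoring (H.deleteEdges {s(u, v)}) k c) (ha : a < k)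
    (hu : IsMissingAt (H.deleteEdges {s(u, v)}) c u a)
    (hv : IsMissingAt (H.deleteEdges {s(u, v)}) c v a) :
    IsProperEdgeColoring H k (Function.update c s(u, v) a) := by
  have hdel : ∀ {p q}, H.Adj p q → s(p, q) ≠ s(u, v) → (H.deleteEdges {s(u, v)}).Adj p q :=
    fun h hne => deleteEdges_adj.2 ⟨h, hne⟩
  have hend : ∀ {w p q}, H.Adj w q → s(w, p) = s(u, v) → s(w, q) ≠ s(u, v) → a ≠ c s(w, q) := by
    intro w p q hq hp hq'
    rcases Sym2.mem_iff.1 (hp ▸ Sym2.mem_mk_left w p) with rfl | rfl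
    · exact (hu (hdel hq hq')).symm
    · exact (hv (hdel hq hq')).symm
  refine ⟨fun p q h => ?_, fun w p q hp hq hpq => ?_⟩
  · by_cases he : s(p, q) = s(u, v)
    · rwa [he, Function.update_self]
    · rw [Function.update_of_ne he]
      exact hc.lt (hdel h he)
  have hpq' : s(w, p) ≠ s(w, q) := fun h => hpq (Sym2.congr_right.1 h)
  by_cases hp' : s(w, p) = s(u, v)
  · have hq' : s(w, q) ≠ s(u, v) := fun h => hpq' (hp'.trans h.symm)
    rw [hp', Function.update_self, Function.update_of_ne hq']
    exact hend hq hp' hq'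
  by_cases hq' : s(w, q) = s(u, v)
  · rw [hq', Function.update_self, Function.update_of_ne hp']
    exact (hend hp hq' hp').symm
  rw [Function.update_of_ne hp', Function.update_of_ne hq']
  exact hc.ne (hdel hp hp') (hdel hq hq') hpq

lemma IsProperEdgeColoring.shift [DecidableEq (Sym2 V)]
    (hc : IsProperEdgeColoring (H.deleteEdges {s(x, y)}) k c) (hz : H.Adj x z) (hzy : z ≠ y)
    (hy : IsMissingAt (H.deleteEdges {s(x, y)}) c y (c s(x, z))) :
    IsProperEdgeColoring (H.deleteEdges {s(x, z)}) k (Function.update c s(x, y) (c s(x, z))) := by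
  have hxz : (H.deleteEdges {s(x, y)}).Adj x z :=
    deleteEdges_adj.2 ⟨hz, fun h => hzy (Sym2.congr_right.1 h)⟩
  have hle : (H.deleteEdges {s(x, z)}).deleteEdges {s(x, y)} ≤ H.deleteEdges {s(x, y)} :=
    fun a b h => by simp only [deleteEdges_adj] at h ⊢; exact ⟨h.1.1, h.2⟩
  refine (hc.mono hle).update (hc.lt hxz) (fun w hw => ?_) (hy.mono hle)
  simp only [deleteEdges_adj, Set.mem_singleton_iff] at hw
  exact hc.ne (deleteEdges_adj.2 ⟨hw.1.1, hw.2⟩) hxz fun h => hw.1.2 (h ▸ rfl)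

end Coloring

def kempeGraph (H : SimpleGraph V) (c : Sym2 V → ℕ) (α β : ℕ) : SimpleGraph V :=
  H.deleteEdges {e | c e ≠ α ∧ c e ≠ β}

open Classical in
noncomputable def kempeSwap (H : SimpleGraph V) (c : Sym2 V → ℕ) (α β : ℕ) (v : V) :
    Sym2 V → ℕ :=
  fun e => if ∃ w ∈ e, (kempeGraph H c α β).Reachable v w then Equiv.swap α β (c e) else c e

section Kempe

variable {H : SimpleGraph V} {c : Sym2 V → ℕ} {k α β a : ℕ} {u v w : V}

@[simp]
lemma kempeGraph_adj :
    (kempeGraph H c α β).Adj u w ↔ H.Adj u w ∧ (c s(u, w) = α ∨ c s(u, w) = β) := by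
  simp [kempeGraph, or_iff_not_and_not]

lemma kempeGraph_neighborSet_subsingleton (hc : IsProperEdgeColoring H k c)
    (hv : IsMissingAt H c v α) : ((kempeGraph H c α β).neighborSet v).Subsingleton := by
  intro p hp q hq
  rw [mem_neighborSet, kempeGraph_adj] at hp hq
  by_contra hpq
  exact hc.ne hp.1 hq.1 hpq ((hp.2.resolve_left (hv hp.1)).trans (hq.2.resolve_left (hv hq.1)).symm)

lemma kempeGraph_neighborSet_diff_subsingleton (hc : IsProperEdgeColoring H k c)
    (hu : (kempeGraph H c α β).Adj v u) :
    ((kempeGraph H c α β).neighborSet v \ {u}).Subsingleton := by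
  rintro p ⟨hp, hpu⟩ q ⟨hq, hqu⟩
  rw [mem_neighborSet, kempeGraph_adj] at hp hq
  rw [kempeGraph_adj] at hu
  by_contra hpq
  have := hc.ne hu.1 hp.1 (Ne.symm hpu)
  have := hc.ne hu.1 hq.1 (Ne.symm hqu)
  have := hc.ne hp.1 hq.1 hpq
  omega

lemma kempeSwap_of_reachable (h : (kempeGraph H c α β).Reachable v w) (u : V) :
    kempeSwap H c α β v s(w, u) = Equiv.swap α β (c s(w, u)) := by
  classical
  exact if_pos ⟨w, Sym2.mem_mk_left w u, h⟩

lemma kempeSwap_of_not_reachable (h : ¬ (kempeGraph H c α β).Reachable v w) (hu : H.Adj w u) :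
    kempeSwap H c α β v s(w, u) = c s(w, u) := by
  classical
  refine ite_eq_right_iff.2 fun ⟨p, hp, hvp⟩ => ?_
  rcases Sym2.mem_iff.1 hp with rfl | rfl
  · exact absurd hvp h
  -- the edge `s(w, u)` does not lie in the Kempe chain, so it is coloured neither `α` nor `β`
  refine Equiv.swap_apply_of_ne_of_ne ?_ ?_ <;> intro hcol <;>
    exact h (hvp.trans (Adj.reachable
      (kempeGraph_adj.2 ⟨hu.symm, by rw [Sym2.eq_swap]; simp [hcol]⟩)))

lemma IsProperEdgeColoring.kempeSwap (hc : IsProperEdgeColoring H k c) (hα : α < k) (hβ : β < k) :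
    IsProperEdgeColoring H k (kempeSwap H c α β v) := by
  refine ⟨fun p q h => ?_, fun w p q hp hq hpq => ?_⟩
  · by_cases hr : (kempeGraph H c α β).Reachable v p
    · rw [kempeSwap_of_reachable hr, Equiv.swap_apply_def]
      split_ifs
      exacts [hβ, hα, hc.lt h]
    · rw [kempeSwap_of_not_reachable hr h]
      exact hc.lt h
  · by_cases hr : (kempeGraph H c α β).Reachable v w
    · rw [kempeSwap_of_reachable hr, kempeSwap_of_reachable hr]
      exact (Equiv.injective _).ne (hc.ne hp hq hpq)
    · rw [kempeSwap_of_not_reachable hr hp, kempeSwap_of_not_reachable hr hq]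
      exact hc.ne hp hq hpq

lemma IsMissingAt.kempeSwap_of_reachable (hw : IsMissingAt H c w α)
    (h : (kempeGraph H c α β).Reachable v w) : IsMissingAt H (kempeSwap H c α β v) w β := by
  intro u hu
  rw [_root_.kempeSwap_of_reachable h, Ne, Equiv.swap_apply_eq_iff, Equiv.swap_apply_right]
  exact hw hu

lemma IsMissingAt.kempeSwap_of_not_reachable (hw : IsMissingAt H c w a)
    (h : ¬ (kempeGraph H c α β).Reachable v w) : IsMissingAt H (kempeSwap H c α β v) w a :=
  fun u hu => by rw [_root_.kempeSwap_of_not_reachable h hu]; exact hw hu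

/-- Interchanging `α` and `β` on the chain of `v` frees `β` at both ends of `s(u, v)`. -/
lemma IsProperEdgeColoring.extend_of_not_reachable
    (hc : IsProperEdgeColoring (H.deleteEdges {s(u, v)}) k c) (hα : α < k) (hβ : β < k)
    (hu : IsMissingAt (H.deleteEdges {s(u, v)}) c u β)
    (hv : IsMissingAt (H.deleteEdges {s(u, v)}) c v α)
    (hr : ¬ (kempeGraph (H.deleteEdges {s(u, v)}) c α β).Reachable v u) :
    ∃ c', IsProperEdgeColoring H k c' := by
  classical
  exact ⟨_, (hc.kempeSwap (v := v) hα hβ).update hβ (hu.kempeSwap_of_not_reachable hr)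
    (hv.kempeSwap_of_reachable Reachable.rfl)⟩

end Kempe

namespace SimpleGraph

variable {M : SimpleGraph V} {a b c u v x p : V}

lemma deleteIncidenceSet_le_deleteEdges (x w : V) :
    M.deleteIncidenceSet x ≤ M.deleteEdges {s(x, w)} := fun a b h => by
  rw [deleteIncidenceSet_adj] at h
  refine deleteEdges_adj.2 ⟨h.1, fun he => ?_⟩
  have : x ∈ s(a, b) := by rw [Set.mem_singleton_iff.1 he]; exact Sym2.mem_mk_left x w
  rcases Sym2.mem_iff.1 this with rfl | rfl
  exacts [h.2.1 rfl, h.2.2 rfl]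

lemma Reachable.deleteIncidenceSet_of_neighborSet_subset (h : M.Reachable v x) (hvx : v ≠ x)
    (hx : M.neighborSet x ⊆ {p}) : (M.deleteIncidenceSet x).Reachable v p := by
  classical
  obtain ⟨q, hq⟩ := h.symm.some.toPath
  cases q with
  | nil => exact absurd rfl hvx
  | cons hxp q =>
    obtain rfl := hx hxp
    have hxq := ((Walk.cons_isPath_iff _ _).1 hq).2
    refine ⟨(q.toDeleteEdges (M.incidenceSet x) fun e he hex => hxq ?_).reverse⟩
    induction e using Sym2.ind with
    | _ s t =>
      rcases (M.mk'_mem_incidenceSet_iff.1 hex).2 with rfl | rfl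
      exacts [q.fst_mem_support_of_mem_edges he, q.snd_mem_support_of_mem_edges he]

/-- `hdeg` says that every vertex has at most two neighbours, so a path leaving `a` away from its
neighbour `u` cannot branch: it is determined up to its first vertex with at most one neighbour. -/
lemma Walk.IsPath.eq_of_neighborSet_subsingleton
    (hdeg : ∀ v u, M.Adj v u → (M.neighborSet v \ {u}).Subsingleton) {p : M.Walk a b}
    {q : M.Walk a c} (hp : p.IsPath) (hq : q.IsPath) (hua : M.Adj u a) (hup : u ∉ p.support)
    (huq : u ∉ q.support) (hb : (M.neighborSet b).Subsingleton)
    (hc : (M.neighborSet c).Subsingleton) : b = c := by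
  induction p generalizing u with
  | nil =>
    cases q with
    | nil => rfl
    | cons h q =>
      obtain rfl : u = _ := hb hua.symm h
      exact absurd (by simp) huq
  | @cons a d b h p ih =>
    cases q with
    | nil =>
      obtain rfl : u = _ := hc hua.symm h
      exact absurd (by simp) hup
    | @cons _ d' _ h' q =>
      have hd : d ≠ u := by rintro rfl; simp at hup
      have hd' : d' ≠ u := by rintro rfl; simp at huq
      obtain rfl := hdeg _ u hua.symm ⟨h, hd⟩ ⟨h', hd'⟩
      rw [Walk.cons_isPath_iff] at hp hq
      exact ih hp.1 hq.1 h hp.2 hq.2 hb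

lemma Reachable.eq_of_neighborSet_subsingleton
    (hdeg : ∀ v u, M.Adj v u → (M.neighborSet v \ {u}).Subsingleton) (hab : M.Reachable a b)
    (hac : M.Reachable a c) (hba : b ≠ a) (hca : c ≠ a) (ha : (M.neighborSet a).Subsingleton)
    (hb : (M.neighborSet b).Subsingleton) (hc : (M.neighborSet c).Subsingleton) : b = c := by
  classical
  obtain ⟨p, hp⟩ := hab.some.toPath
  obtain ⟨q, hq⟩ := hac.some.toPath
  cases p with
  | nil => exact absurd rfl hba
  | cons h p =>
    cases q with
    | nil => exact absurd rfl hca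
    | cons h' q =>
      obtain rfl := ha h h'
      rw [Walk.cons_isPath_iff] at hp hq
      exact hp.1.eq_of_neighborSet_subsingleton hdeg hq.1 h hp.2 hq.2 hb hc

end SimpleGraph

/-- A fan at `x` for a colouring `c` of `H` minus the edge `s(x, y 0)`. -/
structure IsFan (H : SimpleGraph V) (c : Sym2 V → ℕ) (x : V) (y : ℕ → V) (l : ℕ) : Prop where
  injOn : Set.InjOn y (Set.Iic l)
  adj : ∀ i ≤ l, H.Adj x (y i)
  isMissingAt : ∀ i < l, IsMissingAt (H.deleteEdges {s(x, y 0)}) c (y i) (c s(x, y (i + 1)))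

open Classical in
/-- The colour left on `s(x, y j)` is irrelevant: that edge is recoloured afterwards. -/
noncomputable def rotateFan (c : Sym2 V → ℕ) (x : V) (y : ℕ → V) : ℕ → Sym2 V → ℕ
  | 0 => c
  | j + 1 => Function.update (rotateFan c x y j) s(x, y j) (c s(x, y (j + 1)))

section Fan

variable {H : SimpleGraph V} {c : Sym2 V → ℕ} {x v : V} {y : ℕ → V} {k l i j a : ℕ}

lemma IsFan.apply_ne_apply (hy : IsFan H c x y l) (hi : i ≤ l) (hj : j ≤ l) (hij : i ≠ j) :
    y i ≠ y j :=
  fun h => hij (hy.injOn (Set.mem_Iic.2 hi) (Set.mem_Iic.2 hj) h)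

lemma IsFan.ne_apply (hy : IsFan H c x y l) (hi : i ≤ l) : x ≠ y i := (hy.adj i hi).ne

lemma rotateFan_apply_of_forall_ne {e : Sym2 V} (he : ∀ i < j, e ≠ s(x, y i)) :
    rotateFan c x y j e = c e := by
  classical
  induction j with
  | zero => rfl
  | succ j ih =>
    rw [rotateFan, Function.update_of_ne (he j j.lt_succ_self),
      ih fun i hi => he i (hi.trans j.lt_succ_self)]

lemma rotateFan_apply_of_notMem {e : Sym2 V} (he : x ∉ e) : rotateFan c x y j e = c e :=
  rotateFan_apply_of_forall_ne fun _ _ h => he (h ▸ Sym2.mem_mk_left x _)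

lemma rotateFan_apply_of_lt (hinj : Set.InjOn y (Set.Iic j)) (hi : i < j) :
    rotateFan c x y j s(x, y i) = c s(x, y (i + 1)) := by
  classical
  induction j with
  | zero => omega
  | succ j ih =>
    rw [rotateFan]
    rcases (Nat.lt_succ_iff.1 hi).lt_or_eq with hij | rfl
    · rw [Function.update_of_ne, ih (hinj.mono (Set.Iic_subset_Iic.2 j.le_succ)) hij]
      intro h
      exact hij.ne (hinj (by simp; omega) (by simp) (Sym2.congr_right.1 h))
    · exact Function.update_self ..

lemma IsFan.isMissingAt_rotateFan (hy : IsFan H c x y l) (hj : j ≤ l) (hv : ∀ i < j, v ≠ y i)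
    (ha : IsMissingAt (H.deleteEdges {s(x, y 0)}) c v a) :
    IsMissingAt (H.deleteEdges {s(x, y j)}) (rotateFan c x y j) v a := by
  intro w hw
  simp only [deleteEdges_adj, Set.mem_singleton_iff] at hw
  by_cases hfan : ∃ i < j, s(v, w) = s(x, y i)
  · obtain ⟨i, hi, he⟩ := hfan
    obtain ⟨rfl, rfl⟩ : v = x ∧ w = y i := by
      rcases Sym2.eq_iff.1 he with h | ⟨h, -⟩
      exacts [h, absurd h (hv i hi)]
    rw [rotateFan_apply_of_lt (hy.injOn.mono (Set.Iic_subset_Iic.2 hj)) hi]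
    exact ha (deleteEdges_adj.2 ⟨hy.adj _ (by omega), fun h =>
      hy.apply_ne_apply (i := i + 1) (j := 0) (by omega) (by omega) (by omega)
        (Sym2.congr_right.1 h)⟩)
  · simp only [not_exists, not_and] at hfan
    rw [rotateFan_apply_of_forall_ne hfan]
    refine ha (deleteEdges_adj.2 ⟨hw.1, fun h => ?_⟩)
    rcases j.eq_zero_or_pos with rfl | hj0
    · exact hw.2 h
    · exact hfan 0 hj0 h

lemma IsFan.isProperEdgeColoring_rotateFan (hy : IsFan H c x y l)
    (hc : IsProperEdgeColoring (H.deleteEdges {s(x, y 0)}) k c) (hj : j ≤ l) :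
    IsProperEdgeColoring (H.deleteEdges {s(x, y j)}) k (rotateFan c x y j) := by
  classical
  induction j with
  | zero => exact hc
  | succ j ih =>
    have hcol : rotateFan c x y j s(x, y (j + 1)) = c s(x, y (j + 1)) :=
      rotateFan_apply_of_forall_ne fun i hi h =>
        hy.apply_ne_apply hj (by omega) (by omega) (Sym2.congr_right.1 h)
    have hmiss := hy.isMissingAt_rotateFan (j := j) (by omega)
      (fun i hi => hy.apply_ne_apply (by omega) (by omega) hi.ne') (hy.isMissingAt j (by omega))
    rw [← hcol] at hmiss
    rw [rotateFan, ← hcol]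
    exact (ih (by omega)).shift (hy.adj _ hj) (hy.apply_ne_apply hj (by omega) (by omega)) hmiss

end Fan

section Vizing

variable {H : SimpleGraph V} {c : Sym2 V → ℕ} {x y₀ z v p : V} {y : ℕ → V}
  {k l i j m α β : ℕ}

lemma IsFan.update (hy : IsFan H c x y l) (hz : H.Adj x z) (hzy : z ∉ y '' Set.Iic l)
    (hm : IsMissingAt (H.deleteEdges {s(x, y 0)}) c (y l) (c s(x, z))) :
    IsFan H c x (Function.update y (l + 1) z) (l + 1) := by
  have hy' : ∀ i ≤ l, Function.update y (l + 1) z i = y i :=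
    fun i hi => Function.update_of_ne (by omega) _ _
  have hz' : ∀ i ≤ l, z ≠ y i := fun i hi h => hzy ⟨i, Set.mem_Iic.2 hi, h.symm⟩
  refine ⟨fun i hi j hj hij => ?_, fun i hi => ?_, fun i hi => ?_⟩
  · simp only [Set.mem_Iic] at hi hj
    rcases hi.lt_or_eq with hi | rfl <;> rcases hj.lt_or_eq with hj | rfl
    · rw [hy' i (by omega), hy' j (by omega)] at hij
      exact hy.injOn (Set.mem_Iic.2 (by omega)) (Set.mem_Iic.2 (by omega)) hij
    · rw [hy' i (by omega), Function.update_self] at hij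
      exact absurd hij.symm (hz' i (by omega))
    · rw [hy' j (by omega), Function.update_self] at hij
      exact absurd hij (hz' j (by omega))
    · rfl
  · rcases hi.lt_or_eq with hi | rfl
    · rw [hy' i (by omega)]
      exact hy.adj i (by omega)
    · rwa [Function.update_self]
  · rw [hy' 0 (by omega), hy' i (by omega)]
    rcases (Nat.lt_succ_iff.1 hi).lt_or_eq with hi | rfl
    · rw [hy' (i + 1) (by omega)]
      exact hy.isMissingAt i hi
    · rwa [Function.update_self]

lemma exists_maximal_isFan [Finite V] (hxy : H.Adj x y₀) :
    ∃ y l, y 0 = y₀ ∧ IsFan H c x y l ∧ ∀ z, H.Adj x z → z ∉ y '' Set.Iic l →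
      ¬ IsMissingAt (H.deleteEdges {s(x, y₀)}) c (y l) (c s(x, z)) := by
  set S := {l | ∃ y : ℕ → V, y 0 = y₀ ∧ IsFan H c x y l}
  have h0 : 0 ∈ S := ⟨fun _ => y₀, rfl, fun i hi j hj _ => by simp_all, fun _ _ => hxy,
    fun i hi => absurd hi (Nat.not_lt_zero i)⟩
  have hbdd : BddAbove S := ⟨Nat.card V, fun l ⟨y, _, hy⟩ => by
    have := (hy.injOn.ncard_image).symm.trans_le (Set.ncard_le_card (y '' Set.Iic l))
    rw [Set.ncard_Iic_nat] at this
    omega⟩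
  obtain ⟨y, hy0, hy⟩ := Nat.sSup_mem ⟨0, h0⟩ hbdd
  refine ⟨y, _, hy0, hy, fun z hz hzy hm => ?_⟩
  have := le_csSup hbdd ⟨_, (Function.update_of_ne (by omega) _ _).trans hy0,
    hy.update hz hzy (hy0 ▸ hm)⟩
  omega

lemma IsFan.extend_of_isMissingAt (hy : IsFan H c x y l)
    (hc : IsProperEdgeColoring (H.deleteEdges {s(x, y 0)}) k c) (hα : α < k)
    (hx : IsMissingAt (H.deleteEdges {s(x, y 0)}) c x α)
    (hl : IsMissingAt (H.deleteEdges {s(x, y 0)}) c (y l) α) :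
    ∃ c', IsProperEdgeColoring H k c' := by
  classical
  exact ⟨_, (hy.isProperEdgeColoring_rotateFan hc le_rfl).update hα
    (hy.isMissingAt_rotateFan le_rfl (fun i hi => hy.ne_apply hi.le) hx)
    (hy.isMissingAt_rotateFan le_rfl (fun i hi => hy.apply_ne_apply le_rfl hi.le hi.ne') hl)⟩

/-- After rotating the fan up to `y j`, `x` has at most one `α`/`β`-neighbour `p`, so a Kempe
chain reaching `x` reaches `p` without passing through `x`, where the rotation changed nothing. -/
lemma IsFan.reachable_of_reachable_kempeGraph (hy : IsFan H c x y l)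
    (hc : IsProperEdgeColoring (H.deleteEdges {s(x, y 0)}) k c) (hj : j ≤ l)
    (hβ : IsMissingAt (H.deleteEdges {s(x, y 0)}) c x β) (hp : H.Adj x p) (hpj : p ≠ y j)
    (hpα : rotateFan c x y j s(x, p) = α) (hvx : v ≠ x)
    (h : (kempeGraph (H.deleteEdges {s(x, y j)}) (rotateFan c x y j) α β).Reachable v x) :
    (kempeGraph (H.deleteIncidenceSet x) c α β).Reachable v p := by
  have hc' := hy.isProperEdgeColoring_rotateFan hc hj
  have hβ' := hy.isMissingAt_rotateFan hj (fun i hi => hy.ne_apply (hi.le.trans hj)) hβ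
  have hxp : (H.deleteEdges {s(x, y j)}).Adj x p :=
    deleteEdges_adj.2 ⟨hp, fun h => hpj (Sym2.congr_right.1 h)⟩
  have hN : (kempeGraph (H.deleteEdges {s(x, y j)}) (rotateFan c x y j) α β).neighborSet x ⊆
      {p} := by
    intro q hq
    rw [mem_neighborSet, kempeGraph_adj] at hq
    by_contra hqp
    exact hc'.ne hq.1 hxp hqp ((hq.2.resolve_right (hβ' hq.1)).trans hpα.symm)
  refine (h.deleteIncidenceSet_of_neighborSet_subset hvx hN).mono fun a b hab => ?_
  simp only [deleteIncidenceSet_adj, kempeGraph_adj, deleteEdges_adj] at hab ⊢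
  have hx : x ∉ s(a, b) := by
    rw [Sym2.mem_iff]
    exact fun h => h.elim hab.2.1.symm hab.2.2.symm
  rw [rotateFan_apply_of_notMem hx] at hab
  exact ⟨⟨hab.1.1.1, hab.2⟩, hab.1.2⟩

/-- Here `α = c s(x, y (m + 1))` is missing at `y m`, at `y l` and, away from `x`, at `y (m + 1)`;
the `α`/`β`-chains avoiding `x` are paths, so `y m` is joined to at most one of the others. -/
lemma IsFan.extend_of_kempe (hy : IsFan H c x y l)
    (hc : IsProperEdgeColoring (H.deleteEdges {s(x, y 0)}) k c) (hα : α < k) (hβ : β < k)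
    (hβx : IsMissingAt (H.deleteEdges {s(x, y 0)}) c x β)
    (hαl : IsMissingAt (H.deleteEdges {s(x, y 0)}) c (y l) α) (hm : m + 1 < l)
    (hαm : c s(x, y (m + 1)) = α) : ∃ c', IsProperEdgeColoring H k c' := by
  have hle := H.deleteIncidenceSet_le_deleteEdges x (y 0)
  have hcx := hc.mono hle
  have hleaf : ∀ v, IsMissingAt (H.deleteEdges {s(x, y 0)}) c v α →
      ((kempeGraph (H.deleteIncidenceSet x) c α β).neighborSet v).Subsingleton :=
    fun v hv => kempeGraph_neighborSet_subsingleton hcx (hv.mono hle)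
  have hαm' : IsMissingAt (H.deleteEdges {s(x, y 0)}) c (y m) α :=
    hαm ▸ hy.isMissingAt m (by omega)
  have hz : ((kempeGraph (H.deleteIncidenceSet x) c α β).neighborSet (y (m + 1))).Subsingleton := by
    refine kempeGraph_neighborSet_subsingleton hcx fun w hw => ?_
    have hzx : (H.deleteEdges {s(x, y 0)}).Adj (y (m + 1)) x := deleteEdges_adj.2
      ⟨(hy.adj _ (by omega)).symm, fun h => hy.apply_ne_apply (i := m + 1) (j := 0) (by omega)
        (by omega) (by omega) (Sym2.congr_right.1 (Sym2.eq_swap.trans h))⟩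
    rw [← hαm, Sym2.eq_swap (a := x)]
    exact hc.ne (hle hw) hzx (deleteIncidenceSet_adj.1 hw).2.2
  by_cases hreach : (kempeGraph (H.deleteIncidenceSet x) c α β).Reachable (y m) (y (m + 1))
  · refine (hy.isProperEdgeColoring_rotateFan hc le_rfl).extend_of_not_reachable hα hβ
      (hy.isMissingAt_rotateFan le_rfl (fun i hi => hy.ne_apply hi.le) hβx)
      (hy.isMissingAt_rotateFan le_rfl (fun i hi => hy.apply_ne_apply le_rfl hi.le hi.ne') hαl)
      fun h => ?_
    have hwl := hy.reachable_of_reachable_kempeGraph hc le_rfl hβx (hy.adj m (by omega))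
      (hy.apply_ne_apply (by omega) le_rfl (by omega))
      ((rotateFan_apply_of_lt (hy.injOn) (by omega)).trans hαm) (hy.ne_apply le_rfl).symm h
    exact hy.apply_ne_apply (by omega) le_rfl hm.ne
      (hreach.eq_of_neighborSet_subsingleton (fun v u => kempeGraph_neighborSet_diff_subsingleton hcx)
        hwl.symm (hy.apply_ne_apply (by omega) (by omega) (by omega))
        (hy.apply_ne_apply le_rfl (by omega) (by omega)) (hleaf _ hαm') hz (hleaf _ hαl))
  · refine (hy.isProperEdgeColoring_rotateFan hc (j := m) (by omega)).extend_of_not_reachable hα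
      hβ (hy.isMissingAt_rotateFan (by omega) (fun i hi => hy.ne_apply (by omega)) hβx)
      (hy.isMissingAt_rotateFan (by omega)
        (fun i hi => hy.apply_ne_apply (by omega) (by omega) hi.ne') hαm') fun h => hreach ?_
    refine hy.reachable_of_reachable_kempeGraph hc (by omega) hβx (hy.adj _ (by omega))
      (hy.apply_ne_apply (by omega) (by omega) (by omega)) ?_ (hy.ne_apply (by omega)).symm h
    rw [rotateFan_apply_of_forall_ne fun i hi h =>
      hy.apply_ne_apply (i := m + 1) (j := i) (by omega) (by omega) (by omega)
        (Sym2.congr_right.1 h)]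
    exact hαm

lemma exists_isProperEdgeColoring_of_deleteEdges [Finite V]
    (hk : ∀ v, (H.neighborSet v).ncard < k) (hxy : H.Adj x y₀)
    (hc : IsProperEdgeColoring (H.deleteEdges {s(x, y₀)}) k c) :
    ∃ c', IsProperEdgeColoring H k c' := by
  have hmiss : ∀ v, ∃ a < k, IsMissingAt (H.deleteEdges {s(x, y₀)}) c v a := fun v =>
    (exists_isMissingAt (hk v)).imp fun _ ⟨ha, hv⟩ => ⟨ha, hv.mono (deleteEdges_le _)⟩
  obtain ⟨y, l, rfl, hy, hmax⟩ := exists_maximal_isFan (c := c) hxy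
  obtain ⟨α, hα, hαl⟩ := hmiss (y l)
  obtain ⟨β, hβ, hβx⟩ := hmiss x
  by_cases hαx : IsMissingAt (H.deleteEdges {s(x, y 0)}) c x α
  · exact hy.extend_of_isMissingAt hc hα hαx hαl
  obtain ⟨z, hz, hzα⟩ : ∃ z, (H.deleteEdges {s(x, y 0)}).Adj x z ∧ c s(x, z) = α := by
    simpa only [IsMissingAt, not_forall, not_not, exists_prop] using hαx
  -- by maximality of the fan, the `α`-edge at `x` leads back into it
  obtain ⟨i, hi, rfl⟩ : z ∈ y '' Set.Iic l :=
    not_not.1 fun h => hmax z (deleteEdges_le _ hz) h (hzα ▸ hαl)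
  obtain ⟨m, rfl⟩ : ∃ m, i = m + 1 := Nat.exists_eq_succ_of_ne_zero fun h0 =>
    (deleteEdges_adj.1 hz).2 (by rw [h0]; rfl)
  have hml : m + 1 ≠ l := by
    rintro rfl
    exact hαl hz.symm (by rw [Sym2.eq_swap]; exact hzα)
  exact hy.extend_of_kempe hc hα hβ hβx hαl (by simp at hi; omega) hzα

theorem exists_isProperEdgeColoring [Finite V] (hk : ∀ v, (H.neighborSet v).ncard < k) :
    ∃ c, IsProperEdgeColoring H k c := by
  induction hn : H.edgeSet.ncard using Nat.strong_induction_on generalizing H with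
  | _ n ih =>
  obtain hH | ⟨e, he⟩ := H.edgeSet.eq_empty_or_nonempty
  · rw [edgeSet_eq_empty] at hH
    subst hH
    exact ⟨fun _ => 0, fun _ _ h => h.elim, fun _ _ _ h => h.elim⟩
  induction e using Sym2.ind with
  | _ x y =>
  obtain ⟨c, hc⟩ := ih _ (hn ▸ edgeSet_deleteEdges (G := H) {s(x, y)} ▸
      Set.ncard_sdiff_singleton_lt_of_mem he) (H := H.deleteEdges {s(x, y)})
    (fun v => (Set.ncard_le_ncard fun w hw => deleteEdges_le _ hw).trans_lt (hk v)) rfl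
  exact exists_isProperEdgeColoring_of_deleteEdges hk he hc

end Vizing

section Cuts

variable {G : SimpleGraph V} {c : Sym2 V → ℕ}

lemma exists_isRainbowSepCut
    (hc : ∀ e₁ ∈ G.edgeSet, ∀ e₂ ∈ G.edgeSet, EdgesAdj e₁ e₂ → c e₁ ≠ c e₂) (x y : V)
    (hxy : x ≠ y) : ∃ F, IsRainbowSepCut G c F x y := by
  refine ⟨G.incidenceSet x, ⟨G.incidenceSet_subset x, fun ⟨p⟩ => ?_⟩, fun e₁ h₁ e₂ h₂ hce => ?_⟩
  · cases p with
    | nil => exact hxy rfl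
    | cons h _ =>
      exact (deleteEdges_adj.1 h).2 (G.mk'_mem_incidenceSet_left_iff.2 (deleteEdges_adj.1 h).1)
  · by_contra hne
    exact hc e₁ h₁.1 e₂ h₂.1 ⟨hne, x, h₁.2, h₂.2⟩ hce

lemma exists_isProperSepCut (h : ∀ x y : V, x ≠ y → ∃ F, IsRainbowSepCut G c F x y) (x y : V)
    (hxy : x ≠ y) : ∃ F, IsProperSepCut G c F x y :=
  (h x y hxy).imp fun _ hF => ⟨hF.1, fun _ h₁ _ h₂ hadj hce => hadj.1 (hF.2 h₁ h₂ hce)⟩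

end Cuts

theorem stmt0 {V : Type*} [Fintype V] (G : SimpleGraph V) [DecidableRel G.Adj]
    (hconn : G.Connected) (hnt : Nontrivial V) :
    1 ≤ pd G ∧ pd G ≤ rd G ∧ rd G ≤ chromIndex G ∧ chromIndex G ≤ G.maxDegree + 1 := by
  obtain ⟨c, hc⟩ := exists_isProperEdgeColoring (H := G) (k := G.maxDegree + 1) fun v => by
    rw [Set.ncard_eq_toFinset_card']
    exact Nat.lt_succ_of_le (G.degree_le_maxDegree v)
  obtain ⟨hb, hc⟩ := hc.lt_and_ne_of_edgesAdj
  obtain ⟨u, -⟩ := hnt.exists_pair_ne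
  obtain ⟨v, huv⟩ := hconn.preconnected.exists_adj_of_nontrivial u
  refine ⟨?_, ?_, ?_, Nat.sInf_le ⟨c, hb, hc⟩⟩
  · exact le_csInf ⟨_, c, hb, exists_isProperSepCut (exists_isRainbowSepCut hc)⟩
      fun k ⟨c, hb, _⟩ => Nat.one_le_of_lt (hb s(u, v) huv)
  · exact le_csInf ⟨_, c, hb, exists_isRainbowSepCut hc⟩
      fun k ⟨c, hb, hr⟩ => Nat.sInf_le ⟨c, hb, exists_isProperSepCut hr⟩
  · exact le_csInf ⟨_, c, hb, hc⟩
      fun k ⟨c, hb, hc⟩ => Nat.sInf_le ⟨c, hb, exists_isRainbowSepCut hc⟩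
end

section
/- For every integer n ≥ 2, pd(K_n) = ⌈n/2⌉. -/
open SimpleGraph

variable {V : Type*}

/-!
Lower bound: in `K_n` a cut separating `x` from `y` contains every edge from `x` to the far side
and every edge from `y` to the near side. If the cut is proper, each of these two stars is rainbow,
so both sides have at most as many vertices as there are colours, and `n ≤ 2 k`.

Upper bound: colour `ij` by `i + j mod k` with `k = ⌈n/2⌉`. Given `x ≠ y`, split the vertices into
two sides, with `x` and `y` apart, each meeting every residue class mod `k` at most once. The
edges between the sides form a proper cut: two of them at `v` with the same colour `v + u ≡ v + w`
would end at `u ≡ w` on the same side, so `u = w`.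
-/

def edgeBoundary (G : SimpleGraph V) (S : Set V) : Set (Sym2 V) :=
  {e | ∃ a ∈ S, ∃ b ∉ S, G.Adj a b ∧ s(a, b) = e}

lemma edgeBoundary_subset_edgeSet (G : SimpleGraph V) (S : Set V) :
    edgeBoundary G S ⊆ G.edgeSet := by
  rintro _ ⟨a, -, b, -, hab, rfl⟩
  exact hab

lemma not_reachable_deleteEdges_edgeBoundary {G : SimpleGraph V} {S : Set V} {x y : V}
    (hx : x ∈ S) (hy : y ∉ S) : ¬ (G.deleteEdges (edgeBoundary G S)).Reachable x y := by
  rintro ⟨p⟩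
  obtain ⟨d, -, hd, hd'⟩ := p.exists_boundary_dart S hx hy
  have hadj := d.adj
  rw [deleteEdges_adj] at hadj
  exact hadj.2 ⟨_, hd, _, hd', hadj.1, rfl⟩

lemma isProperSepCut_edgeBoundary {G : SimpleGraph V} {c : Sym2 V → ℕ} {S : Set V} {x y : V}
    (hx : x ∈ S) (hy : y ∉ S) (hS : ∀ v, Set.InjOn (fun u => c s(v, u)) S)
    (hSc : ∀ v, Set.InjOn (fun u => c s(v, u)) Sᶜ) :
    IsProperSepCut G c (edgeBoundary G S) x y := by
  refine ⟨⟨edgeBoundary_subset_edgeSet G S, not_reachable_deleteEdges_edgeBoundary hx hy⟩, ?_⟩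
  rintro _ ⟨a₁, ha₁, b₁, hb₁, -, rfl⟩ _ ⟨a₂, ha₂, b₂, hb₂, -, rfl⟩ ⟨hne, v, hv₁, hv₂⟩ hc
  rw [Sym2.mem_iff] at hv₁ hv₂
  rcases hv₁ with rfl | rfl <;> rcases hv₂ with rfl | rfl
  · exact hne (congrArg _ (hSc v hb₁ hb₂ hc))
  · exact hb₂ ha₁
  · exact hb₁ ha₂
  · rw [Sym2.eq_swap, Sym2.eq_swap (a := a₂)] at hc hne
    exact hne (congrArg _ (hS v ha₁ ha₂ hc))

lemma mem_of_reachable_of_not_reachable {G : SimpleGraph V} {F : Set (Sym2 V)} {x a b : V}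
    (ha : (G.deleteEdges F).Reachable x a) (hb : ¬ (G.deleteEdges F).Reachable x b)
    (hab : G.Adj a b) : s(a, b) ∈ F := by
  by_contra hF
  exact hb (ha.trans (Adj.reachable ((deleteEdges_adj ..).mpr ⟨hab, hF⟩)))

lemma card_le_of_forall_mem_cut {G : SimpleGraph V} {c : Sym2 V → ℕ} {F : Set (Sym2 V)} {m : ℕ}
    (hc : ∀ e ∈ G.edgeSet, c e < m) (hF : F ⊆ G.edgeSet)
    (hprop : ∀ e₁ ∈ F, ∀ e₂ ∈ F, EdgesAdj e₁ e₂ → c e₁ ≠ c e₂)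
    (x : V) (T : Finset V) (hT : ∀ b ∈ T, s(x, b) ∈ F) : T.card ≤ m := by
  simpa using Finset.card_le_card_of_injOn (fun b => c s(x, b)) (t := Finset.range m)
    (fun b hb => Finset.mem_range.mpr (hc _ (hF (hT b hb))))
    (fun b₁ hb₁ b₂ hb₂ hcc => by_contra fun hne => hprop _ (hT b₁ hb₁) _ (hT b₂ hb₂)
      ⟨fun h => hne (Sym2.congr_right.mp h), x, Sym2.mem_mk_left x b₁, Sym2.mem_mk_left x b₂⟩
      hcc)

lemma card_le_two_mul_of_isProperSepCut_top [Fintype V] {c : Sym2 V → ℕ} {F : Set (Sym2 V)}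
    {m : ℕ} {x y : V} (hc : ∀ e ∈ (⊤ : SimpleGraph V).edgeSet, c e < m)
    (hF : IsProperSepCut ⊤ c F x y) : Fintype.card V ≤ 2 * m := by
  classical
  obtain ⟨⟨hFsub, hxy⟩, hprop⟩ := hF
  set A : Finset V := {v | ((⊤ : SimpleGraph V).deleteEdges F).Reachable x v}
  have hfar : Aᶜ.card ≤ m := by
    refine card_le_of_forall_mem_cut hc hFsub hprop x _ fun b hb => ?_
    rw [Finset.mem_compl, Finset.mem_filter] at hb
    refine mem_of_reachable_of_not_reachable .rfl (hb ⟨Finset.mem_univ _, ·⟩) ?_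
    rintro rfl
    exact hb ⟨Finset.mem_univ _, .rfl⟩
  have hnear : A.card ≤ m := by
    refine card_le_of_forall_mem_cut hc hFsub hprop y _ fun a ha => ?_
    rw [Finset.mem_filter] at ha
    rw [Sym2.eq_swap]
    refine mem_of_reachable_of_not_reachable ha.2 hxy ?_
    rintro rfl
    exact hxy ha.2
  have := Finset.card_add_card_compl A
  omega

lemma pd_le {G : SimpleGraph V} {c : Sym2 V → ℕ} {k : ℕ} (hc : ∀ e ∈ G.edgeSet, c e < k)
    (hsep : ∀ x y : V, x ≠ y → ∃ F, IsProperSepCut G c F x y) : pd G ≤ k :=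
  Nat.sInf_le ⟨c, hc, hsep⟩

lemma exists_coloring_lt_pd {G : SimpleGraph V} {c : Sym2 V → ℕ} {k : ℕ}
    (hc : ∀ e ∈ G.edgeSet, c e < k) (hsep : ∀ x y : V, x ≠ y → ∃ F, IsProperSepCut G c F x y) :
    ∃ c' : Sym2 V → ℕ, (∀ e ∈ G.edgeSet, c' e < pd G) ∧
      ∀ x y : V, x ≠ y → ∃ F, IsProperSepCut G c' F x y :=
  Nat.sInf_mem (s := {m | ∃ c' : Sym2 V → ℕ, (∀ e ∈ G.edgeSet, c' e < m) ∧
    ∀ x y : V, x ≠ y → ∃ F, IsProperSepCut G c' F x y}) ⟨k, c, hc, hsep⟩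

lemma Nat.lt_iff_not_lt_of_modEq {u w k : ℕ} (hu : u < 2 * k) (hw : w < 2 * k)
    (h : u ≡ w [MOD k]) (hne : u ≠ w) : u < k ↔ ¬ w < k := by
  constructor
  · exact fun huk hwk => hne (h.eq_of_lt_of_lt huk hwk)
  · intro hwk
    by_contra huk
    have h' : u - k + k ≡ w - k + k [MOD k] := by rwa [Nat.sub_add_cancel (by omega),
      Nat.sub_add_cancel (by omega)]
    have := (Nat.ModEq.add_right_cancel' k h').eq_of_lt_of_lt (by omega) (by omega)
    omega

section SumMod

variable {n k : ℕ}

def sumModColoring (k : ℕ) : Sym2 (Fin n) → ℕ :=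
  Sym2.lift ⟨fun i j => ((i : ℕ) + j) % k, fun i j => by simp only [Nat.add_comm]⟩

lemma sumModColoring_lt (hk : 0 < k) (e : Sym2 (Fin n)) : sumModColoring k e < k := by
  induction e using Sym2.ind with
  | _ i j => exact Nat.mod_lt _ hk

lemma modEq_of_sumModColoring_eq {v u w : Fin n}
    (h : sumModColoring k s(v, u) = sumModColoring k s(v, w)) : (u : ℕ) ≡ w [MOD k] :=
  Nat.ModEq.add_left_cancel' (v : ℕ) h

/-- Each residue class mod `k` in `Fin n` is `{r, r + k}` or `{r}`, its two elements on opposite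
sides of `k`; flipping the side of whole classes puts `x` and `y` where we want them. -/
lemma exists_set_splitting_residues (hn : n ≤ 2 * k) {x y : Fin n} (hxy : x ≠ y) :
    ∃ S : Set (Fin n), x ∈ S ∧ y ∉ S ∧
      ∀ u w : Fin n, u ≠ w → (u : ℕ) ≡ w [MOD k] → (u ∈ S ↔ w ∉ S) := by
  let flipClass (r : ℕ) : Prop := if r = (x : ℕ) % k then (x : ℕ) < k else ¬ (y : ℕ) < k
  have hsplit (u w : Fin n) (hne : u ≠ w) (h : (u : ℕ) ≡ w [MOD k]) :
      ((u : ℕ) < k ↔ flipClass (u % k)) ↔ ¬ ((w : ℕ) < k ↔ flipClass (w % k)) := by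
    have := Nat.lt_iff_not_lt_of_modEq (by omega) (by omega) h (Fin.val_ne_of_ne hne)
    rw [show (w : ℕ) % k = u % k from h.symm]
    tauto
  have hxS : (x : ℕ) < k ↔ flipClass (x % k) := by simp [flipClass]
  refine ⟨{v | (v : ℕ) < k ↔ flipClass (v % k)}, hxS, ?_, hsplit⟩
  by_cases hr : (x : ℕ) ≡ y [MOD k]
  · exact (hsplit x y hxy hr).mp hxS
  · simp only [Set.mem_ofPred_eq, flipClass, if_neg (Ne.symm hr)]
    tauto

lemma exists_isProperSepCut_sumModColoring (hn : n ≤ 2 * k) {x y : Fin n} (hxy : x ≠ y) :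
    ∃ F, IsProperSepCut ⊤ (sumModColoring k) F x y := by
  obtain ⟨S, hx, hy, hS⟩ := exists_set_splitting_residues hn hxy
  refine ⟨_, isProperSepCut_edgeBoundary hx hy (fun v u hu w hw h => ?_) fun v u hu w hw h => ?_⟩
  · by_contra hne
    exact (hS u w hne (modEq_of_sumModColoring_eq h)).mp hu hw
  · by_contra hne
    exact hu ((hS u w hne (modEq_of_sumModColoring_eq h)).mpr hw)

end SumMod

theorem stmt3 (n : ℕ) (hn : 2 ≤ n) :
    pd (⊤ : SimpleGraph (Fin n)) = (n + 1) / 2 := by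
  set k := (n + 1) / 2
  have hcol : ∀ e ∈ (⊤ : SimpleGraph (Fin n)).edgeSet, sumModColoring k e < k :=
    fun e _ => sumModColoring_lt (by omega) e
  have hsep : ∀ x y : Fin n, x ≠ y → ∃ F, IsProperSepCut ⊤ (sumModColoring k) F x y :=
    fun x y hxy => exists_isProperSepCut_sumModColoring (by omega) hxy
  refine le_antisymm (pd_le hcol hsep) ?_
  obtain ⟨c, hc, hsep'⟩ := exists_coloring_lt_pd hcol hsep
  obtain ⟨F, hF⟩ := hsep' ⟨0, by omega⟩ ⟨1, by omega⟩ (by simp [Fin.ext_iff])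
  have := card_le_two_mul_of_isProperSepCut_top hc hF
  rw [Fintype.card_fin] at this
  omega
end

section
/- Let G be a nontrivial connected graph with blocks B_1, …, B_t. Then pd(G) = max{pd(B_i) : i = 1, …, t}. -/
open SimpleGraph

variable {V : Type*}

/-- A subgraph is "cut-free" if it is connected and has no cut vertex. -/
def CutFree {V : Type*} (G : SimpleGraph V) (H : G.Subgraph) : Prop :=
  H.coe.Connected ∧ ∀ v ∈ H.verts, H.verts = {v} ∨ (H.deleteVerts {v}).coe.Connected

/-- A block: a maximal connected subgraph without cut vertices. -/
def IsBlock {V : Type*} (G : SimpleGraph V) (H : G.Subgraph) : Prop :=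
  CutFree G H ∧ ∀ H' : G.Subgraph, H ≤ H' → CutFree G H' → H' = H

/-!
Restricting an optimal colouring of `G` to a subgraph gives `pd B ≤ pd G`. Conversely, colour
every block optimally; two blocks share at most one vertex, so every edge lies in exactly one
block and these colourings glue. If `x ≠ y` are in one component, there is a block `B` with two
distinct vertices `u`, `v` that every `x`–`y` walk visits, so a proper cut separating `u` from `v`
inside `B` separates `x` from `y` in `G`. The point is that a walk leaving a block can re-enter it
only where it left: otherwise the excursion is an ear whose addition to `B` leaves no cut vertex,
contradicting maximality.
-/

namespace SimpleGraph

variable {G : SimpleGraph V}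

namespace Subgraph

lemma deleteVerts_sup (H K : G.Subgraph) (s : Set V) :
    (H ⊔ K).deleteVerts s = H.deleteVerts s ⊔ K.deleteVerts s := by
  ext x y
  · simp [or_and_right]
  · simp only [deleteVerts_adj, verts_sup, sup_adj, Set.mem_union]
    grind [Adj.fst_mem, Adj.snd_mem]

lemma deleteVerts_singleton_of_notMem {H : G.Subgraph} {z : V} (hz : z ∉ H.verts) :
    H.deleteVerts {z} = H := by
  rw [← deleteVerts_inter_verts_left_eq, Set.inter_singleton_eq_empty.mpr hz, deleteVerts_empty]

lemma Connected.sup_of_mem {H K : G.Subgraph} (hH : H.Connected) (hK : K.Connected) {x : V}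
    (hxH : x ∈ H.verts) (hxK : x ∈ K.verts) : (H ⊔ K).Connected :=
  connected_sup hH.preconnected hK.preconnected ⟨x, hxH, hxK⟩

lemma map_val_mem_edgeSet {H : G.Subgraph} {e : Sym2 H.verts}
    (he : e ∈ H.coe.edgeSet) : e.map (↑) ∈ G.edgeSet := by
  rw [edgeSet_coe] at he
  exact H.edgeSet_subset he

end Subgraph

lemma Walk.IsPath.connected_deleteVerts_start {u v : V} {p : G.Walk u v} (hp : p.IsPath)
    (huv : u ≠ v) :
    (p.toSubgraph.deleteVerts {u}).Connected ∧ v ∈ (p.toSubgraph.deleteVerts {u}).verts := by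
  cases p with
  | nil => exact absurd rfl huv
  | @cons _ w _ h q =>
    have hu : u ∉ q.support := ((Walk.cons_isPath_iff h q).mp hp).2
    refine ⟨?_, by simp [huv.symm]⟩
    refine q.toSubgraph_connected.mono ?_ ?_
    · have hq : q.toSubgraph.deleteVerts {u} = q.toSubgraph :=
        Subgraph.deleteVerts_singleton_of_notMem (by simpa using hu)
      rw [← hq]
      exact Subgraph.deleteVerts_mono le_sup_right
    · ext z
      simp only [Walk.verts_toSubgraph, Subgraph.deleteVerts_verts, Walk.support_cons]
      grind

lemma Subgraph.Connected.sup_deleteVerts_path {M : G.Subgraph} (hM : M.Connected) {z u : V}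
    {q : G.Walk z u} (hq : q.IsPath) (hu : u ≠ z → u ∈ M.verts) :
    (M ⊔ q.toSubgraph.deleteVerts {z}).Connected := by
  obtain rfl | huz := eq_or_ne u z
  · obtain rfl := (Walk.isPath_iff_nil.mp hq).eq_nil
    exact hM.mono le_sup_left (by simp)
  · obtain ⟨hqz, huq⟩ := hq.connected_deleteVerts_start huz.symm
    exact hM.sup_of_mem hqz (hu huz) huq

lemma Walk.exists_last_exit (S : Set V) {s y : V} (P : G.Walk s y) (hy : y ∉ S)
    (hP : ∃ z ∈ P.support, z ∈ S) :
    ∃ v ∈ P.support, v ∈ S ∧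
      ∃ w, G.Adj v w ∧ ∃ R : G.Walk w y, ∀ z ∈ R.support, z ∉ S := by
  induction P with
  | nil =>
    obtain ⟨z, hz, hzS⟩ := hP
    rw [Walk.support_nil, List.mem_singleton] at hz
    exact absurd (hz ▸ hzS) hy
  | @cons s c _ hsc P ih =>
    by_cases hP' : ∀ z ∈ P.support, z ∉ S
    · obtain ⟨z, hz, hzS⟩ := hP
      rw [Walk.support_cons, List.mem_cons] at hz
      obtain rfl := hz.resolve_right fun hz => hP' z hz hzS
      exact ⟨z, Walk.start_mem_support _, hzS, c, hsc, P, hP'⟩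
    · obtain ⟨v, hvP, hv⟩ := ih hy (by simpa using hP')
      exact ⟨v, List.mem_cons_of_mem _ hvP, hv⟩

end SimpleGraph

section Blocks

variable {G : SimpleGraph V}

lemma cutFree_of_connected {H : G.Subgraph} (hH : H.Connected)
    (hdel : ∀ z, (H.deleteVerts {z}).Connected) : CutFree G H :=
  ⟨hH.coe, fun z _ => Or.inr (hdel z).coe⟩

lemma CutFree.connected {H : G.Subgraph} (hH : CutFree G H) : H.Connected := ⟨hH.1⟩

lemma CutFree.connected_deleteVerts {H : G.Subgraph} (hH : CutFree G H) {a b : V}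
    (ha : a ∈ H.verts) (hb : b ∈ H.verts) (hab : a ≠ b) (z : V) :
    (H.deleteVerts {z}).Connected := by
  by_cases hz : z ∈ H.verts
  · refine ⟨(hH.2 z hz).resolve_left fun h => hab ?_⟩
    rw [h] at ha hb
    exact ha.trans hb.symm
  · rw [Subgraph.deleteVerts_singleton_of_notMem hz]
    exact hH.connected

lemma cutFree_subgraphOfAdj {a b : V} (h : G.Adj a b) : CutFree G (G.subgraphOfAdj h) := by
  refine ⟨(Subgraph.subgraphOfAdj_connected h).coe, fun z hz => Or.inr ?_⟩
  have hp : h.toWalk.IsPath := by simp [h.ne]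
  rw [← Walk.toSubgraph_cons_nil_eq_subgraphOfAdj]
  rcases hz with rfl | rfl
  · exact (hp.connected_deleteVerts_start h.ne).1.coe
  · rw [← Walk.toSubgraph_reverse]
    exact (hp.reverse.connected_deleteVerts_start h.ne.symm).1.coe

lemma CutFree.sup_toSubgraph {B : G.Subgraph} (hB : CutFree G B) {a d : V}
    (ha : a ∈ B.verts) (hd : d ∈ B.verts) (had : a ≠ d) {p : G.Walk a d} (hp : p.IsPath) :
    CutFree G (B ⊔ p.toSubgraph) := by
  classical
  refine cutFree_of_connected
    (hB.connected.sup_of_mem p.toSubgraph_connected ha p.start_mem_verts_toSubgraph) fun z => ?_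
  have hBz := hB.connected_deleteVerts ha hd had z
  rw [Subgraph.deleteVerts_sup]
  by_cases hz : z ∈ p.support
  · rw [← p.take_spec hz, Walk.toSubgraph_append, Subgraph.deleteVerts_sup, ← sup_assoc]
    have h₁ :
        (B.deleteVerts {z} ⊔ (p.takeUntil z hz).toSubgraph.deleteVerts {z}).Connected := by
      rw [← Walk.toSubgraph_reverse]
      exact hBz.sup_deleteVerts_path (hp.takeUntil hz).reverse fun h => ⟨ha, h⟩
    exact h₁.sup_deleteVerts_path (hp.dropUntil hz) fun h => Or.inl ⟨hd, h⟩
  · rw [Subgraph.deleteVerts_singleton_of_notMem (H := p.toSubgraph) (by simpa using hz)]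
    exact hBz.sup_of_mem p.toSubgraph_connected ⟨ha, fun h => hz (h ▸ p.start_mem_support)⟩
      p.start_mem_verts_toSubgraph

lemma CutFree.sup {H K : G.Subgraph} (hH : CutFree G H) (hK : CutFree G K) {a b : V}
    (hab : a ≠ b) (haH : a ∈ H.verts) (hbH : b ∈ H.verts) (haK : a ∈ K.verts)
    (hbK : b ∈ K.verts) : CutFree G (H ⊔ K) := by
  refine cutFree_of_connected (hH.connected.sup_of_mem hK.connected haH haK) fun z => ?_
  rw [Subgraph.deleteVerts_sup]
  have hHz := hH.connected_deleteVerts haH hbH hab z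
  have hKz := hK.connected_deleteVerts haK hbK hab z
  obtain rfl | haz := eq_or_ne a z
  · exact hHz.sup_of_mem hKz ⟨hbH, hab.symm⟩ ⟨hbK, hab.symm⟩
  · exact hHz.sup_of_mem hKz ⟨haH, haz⟩ ⟨haK, haz⟩

lemma exists_isBlock_le [Finite V] {H : G.Subgraph} (hH : CutFree G H) :
    ∃ B, IsBlock G B ∧ H ≤ B := by
  obtain ⟨B, ⟨hB, hHB⟩, hmax⟩ :=
    (Set.toFinite {K | CutFree G K ∧ H ≤ K}).exists_maximalFor id _ ⟨H, hH, le_rfl⟩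
  exact ⟨B, ⟨hB, fun K hBK hK => le_antisymm (hmax ⟨hK, hHB.trans hBK⟩ hBK) hBK⟩, hHB⟩

namespace IsBlock

variable {B : G.Subgraph}

lemma toSubgraph_le (hB : IsBlock G B) {a d : V} (ha : a ∈ B.verts) (hd : d ∈ B.verts)
    (had : a ≠ d) {p : G.Walk a d} (hp : p.IsPath) : p.toSubgraph ≤ B := by
  rw [← hB.2 _ le_sup_left (hB.1.sup_toSubgraph ha hd had hp)]
  exact le_sup_right

lemma adj (hB : IsBlock G B) {a b : V} (ha : a ∈ B.verts) (hb : b ∈ B.verts) (h : G.Adj a b) :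
    B.Adj a b := by
  have hle := hB.toSubgraph_le ha hb h.ne (p := h.toWalk) (by simp [h.ne])
  rwa [Walk.toSubgraph_cons_nil_eq_subgraphOfAdj, subgraphOfAdj_le_iff] at hle

lemma eq_of_excursion (hB : IsBlock G B) {a d w w' : V} (ha : a ∈ B.verts)
    (hd : d ∈ B.verts) (haw : G.Adj a w) (hdw' : G.Adj d w') (C : G.Walk w w')
    (hC : ∀ z ∈ C.support, z ∉ B.verts) : a = d := by
  classical
  by_contra had
  have hp : (Walk.cons haw (C.bypass.concat hdw'.symm)).IsPath := by
    refine (Walk.cons_isPath_iff _ _).mpr ⟨C.bypass_isPath.concat ?_ _, ?_⟩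
    · exact fun h => hC d (C.support_bypass_subset_support h) hd
    · rw [Walk.support_concat, List.mem_append, List.mem_singleton]
      rintro (h | rfl)
      · exact hC a (C.support_bypass_subset_support h) ha
      · exact had rfl
  refine hC w C.start_mem_support ((hB.toSubgraph_le ha hd had hp).1 ?_)
  simp

lemma eq_of_mem_of_mem {B' : G.Subgraph} (hB : IsBlock G B) (hB' : IsBlock G B') {a b : V}
    (hab : a ≠ b) (ha : a ∈ B.verts) (hb : b ∈ B.verts) (ha' : a ∈ B'.verts)
    (hb' : b ∈ B'.verts) : B = B' := by
  have hcf := hB.1.sup hB'.1 hab ha hb ha' hb'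
  exact (hB.2 _ le_sup_left hcf).symm.trans (hB'.2 _ le_sup_right hcf)

lemma eq_of_map_val_eq {B' : G.Subgraph} (hB : IsBlock G B) (hB' : IsBlock G B')
    {e : Sym2 B.verts} {e' : Sym2 B'.verts} (he : e ∈ B.coe.edgeSet)
    (h : e.map Subtype.val = e'.map Subtype.val) : B = B' := by
  have hmem {z : V} (hz : z ∈ e.map Subtype.val) : z ∈ B'.verts := by
    obtain ⟨z', -, rfl⟩ := Sym2.mem_map.mp (h ▸ hz)
    exact z'.2
  induction e using Sym2.ind with
  | _ a b =>
    have hab : (a : V) ≠ b := Subtype.coe_injective.ne (show B.coe.Adj a b from he).ne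
    exact hB.eq_of_mem_of_mem hB' hab a.2 b.2
      (hmem (Sym2.mem_map.mpr ⟨a, Sym2.mem_mk_left _ _, rfl⟩))
      (hmem (Sym2.mem_map.mpr ⟨b, Sym2.mem_mk_right _ _, rfl⟩))

lemma reachable_deleteEdges (hB : IsBlock G B)
    {F : Set (Sym2 B.verts)} {u v : B.verts}
    (h : (G.deleteEdges (Sym2.map (↑) '' F)).Reachable u v) :
    (B.coe.deleteEdges F).Reachable u v := by
  /- Track the last vertex `a` of `B` visited so far: the walk is either at `a` or on an
  excursion from `a` outside `B`, and such an excursion can only re-enter `B` at `a`. -/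
  suffices key : ∀ {s t : V} (W : (G.deleteEdges (Sym2.map (↑) '' F)).Walk s t)
      (ht : t ∈ B.verts) (a : B.verts),
      (s = a ∨ ∃ w, G.Adj a w ∧ ∃ C : G.Walk w s, ∀ z ∈ C.support, z ∉ B.verts) →
      (B.coe.deleteEdges F).Reachable a ⟨t, ht⟩ from
    h.elim fun W => key W v.2 u (Or.inl rfl)
  intro s t W
  induction W with
  | nil =>
    rintro ht a (rfl | ⟨w, -, C, hC⟩)
    · rfl
    · exact absurd ht (hC _ C.end_mem_support)
  | @cons s c _ hsc W ih =>
    intro ht a hs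
    obtain ⟨hsc, hF⟩ := deleteEdges_adj.mp hsc
    by_cases hc : c ∈ B.verts
    · rcases hs with rfl | ⟨w, haw, C, hC⟩
      · have hstep : (B.coe.deleteEdges F).Adj a ⟨c, hc⟩ :=
          deleteEdges_adj.mpr ⟨hB.adj a.2 hc hsc, fun h => hF ⟨_, h, rfl⟩⟩
        exact hstep.reachable.trans (ih ht ⟨c, hc⟩ (Or.inl rfl))
      · obtain rfl : (a : V) = c := hB.eq_of_excursion a.2 hc haw hsc.symm C hC
        exact ih ht a (Or.inl rfl)
    · refine ih ht a (Or.inr ?_)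
      rcases hs with rfl | ⟨w, haw, C, hC⟩
      · exact ⟨c, hsc, Walk.nil, by simpa using hc⟩
      · refine ⟨w, haw, C.concat hsc, fun z hz => ?_⟩
        rw [Walk.support_concat, List.mem_append, List.mem_singleton] at hz
        rcases hz with hz | rfl
        exacts [hC z hz, hc]

end IsBlock

lemma exists_isBlock_adj [Finite V] {a b : V} (h : G.Adj a b) :
    ∃ B, IsBlock G B ∧ B.Adj a b := by
  obtain ⟨B, hB, hle⟩ := exists_isBlock_le (cutFree_subgraphOfAdj h)
  exact ⟨B, hB, (subgraphOfAdj_le_iff h B).mp hle⟩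

lemma exists_isBlock_forall_walk_mem_support [Finite V] {x y : V} (hxy : x ≠ y)
    (hr : G.Reachable x y) :
    ∃ B, IsBlock G B ∧ ∃ u ∈ B.verts, ∃ v ∈ B.verts, u ≠ v ∧
      ∀ W : G.Walk x y, u ∈ W.support ∧ v ∈ W.support := by
  obtain ⟨P, hP⟩ := hr.exists_isPath
  obtain ⟨c, hxc, P, rfl⟩ := Walk.exists_eq_cons_of_ne hxy P
  obtain ⟨B, hB, hBxc⟩ := exists_isBlock_adj hxc
  refine ⟨B, hB, x, hBxc.fst_mem, ?_⟩
  by_cases hy : y ∈ B.verts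
  · exact ⟨y, hy, hxy, fun W => ⟨W.start_mem_support, W.end_mem_support⟩⟩
  obtain ⟨v, hvP, hv, w, hvw, R, hR⟩ :=
    P.exists_last_exit B.verts hy ⟨c, P.start_mem_support, hBxc.snd_mem⟩
  have hxv : x ≠ v := fun h => ((Walk.cons_isPath_iff _ _).mp hP).2 (h ▸ hvP)
  refine ⟨v, hv, hxv, fun W => ⟨W.start_mem_support, ?_⟩⟩
  by_contra hvW
  obtain ⟨e, heW, he, w', hew', R', hR'⟩ :=
    W.exists_last_exit B.verts hy ⟨x, W.start_mem_support, hBxc.fst_mem⟩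
  have hve : v = e := hB.eq_of_excursion hv he hvw hew' (R.append R'.reverse) fun z hz => by
    rw [Walk.mem_support_append_iff, Walk.support_reverse, List.mem_reverse] at hz
    exact hz.elim (hR z) (hR' z)
  exact hvW (hve ▸ heW)

end Blocks

section Coloring

variable {G : SimpleGraph V}

lemma edgesAdj_map_iff {W : Type*} {f : V → W} (hf : Function.Injective f) {e₁ e₂ : Sym2 V} :
    EdgesAdj (e₁.map f) (e₂.map f) ↔ EdgesAdj e₁ e₂ := by
  simp only [EdgesAdj, (Sym2.map.injective hf).ne_iff, Sym2.mem_map]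
  constructor
  · rintro ⟨hne, _, ⟨a, ha, rfl⟩, ⟨b, hb, hab⟩⟩
    exact ⟨hne, a, ha, hf hab ▸ hb⟩
  · rintro ⟨hne, a, ha, hb⟩
    exact ⟨hne, f a, ⟨a, ha, rfl⟩, ⟨a, hb, rfl⟩⟩

lemma IsSepCut.of_forall_walk_mem_support {F : Set (Sym2 V)} {x y u v : V}
    (hF : IsSepCut G F u v) (huv : ∀ W : G.Walk x y, u ∈ W.support ∧ v ∈ W.support) :
    IsSepCut G F x y := by
  classical
  refine ⟨hF.1, fun ⟨W⟩ => hF.2 ?_⟩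
  have hW := huv (W.mapLe (G.deleteEdges_le F))
  rw [Walk.support_mapLe_eq_support] at hW
  exact (Reachable.symm ⟨W.takeUntil u hW.1⟩).trans ⟨W.takeUntil v hW.2⟩

lemma pd_le_of_coloring {k : ℕ} (c : Sym2 V → ℕ) (hc : ∀ e ∈ G.edgeSet, c e < k)
    (hsep : ∀ x y, x ≠ y → ∃ F, IsProperSepCut G c F x y) : pd G ≤ k :=
  Nat.sInf_le ⟨c, hc, hsep⟩

lemma exists_pd_coloring [Finite V] (G : SimpleGraph V) :
    ∃ c : Sym2 V → ℕ, (∀ e ∈ G.edgeSet, c e < pd G) ∧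
      ∀ x y, x ≠ y → ∃ F, IsProperSepCut G c F x y := by
  have := Fintype.ofFinite (Sym2 V)
  obtain ⟨c, hc⟩ := exists_injective_nat (Sym2 V)
  /- An injective colouring makes every edge-cut proper, and the edges at `x` separate `x`
  from everything else. -/
  have hsep (x y : V) (hxy : x ≠ y) : ¬ (G.deleteEdges (G.incidenceSet x)).Reachable x y := by
    rintro ⟨W⟩
    cases W with
    | nil => exact hxy rfl
    | cons h _ => exact (deleteIncidenceSet_adj.mp h).2.1 rfl
  exact Nat.sInf_mem (s := {k | ∃ c : Sym2 V → ℕ, (∀ e ∈ G.edgeSet, c e < k) ∧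
      ∀ x y, x ≠ y → ∃ F, IsProperSepCut G c F x y})
    ⟨Finset.univ.sup c + 1, c, fun e _ => Nat.lt_succ_of_le (Finset.le_sup (Finset.mem_univ e)),
      fun x y hxy => ⟨G.incidenceSet x, ⟨G.incidenceSet_subset x, hsep x y hxy⟩,
        fun e₁ _ e₂ _ h => hc.ne h.1⟩⟩

lemma pd_coe_le [Finite V] (G : SimpleGraph V) (H : G.Subgraph) : pd H.coe ≤ pd G := by
  obtain ⟨c, hc, hsep⟩ := exists_pd_coloring G
  refine pd_le_of_coloring (c ∘ Sym2.map (↑)) (fun e he => hc _ (H.map_val_mem_edgeSet he))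
    fun x y hxy => ?_
  obtain ⟨F, ⟨-, hF⟩, hprop⟩ := hsep x y (Subtype.coe_injective.ne hxy)
  let F' := {e ∈ H.coe.edgeSet | e.map (↑) ∈ F}
  let hom : H.coe.deleteEdges F' →g G.deleteEdges F :=
    ⟨(↑), fun h => by
      obtain ⟨hH, hF'⟩ := deleteEdges_adj.mp h
      exact deleteEdges_adj.mpr ⟨H.adj_sub hH, fun hF => hF' ⟨hH, hF⟩⟩⟩
  exact ⟨F', ⟨fun e he => he.1, fun hr => hF (hr.map hom)⟩,
    fun e₁ he₁ e₂ he₂ h => hprop _ he₁.2 _ he₂.2 ((edgesAdj_map_iff Subtype.val_injective).mpr h)⟩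

/-- On an edge of `G` the `sInf` is taken over a singleton, since the edge lies in exactly one
block (`blockColoring_map_val`). -/
noncomputable def blockColoring (G : SimpleGraph V) (col : ∀ B : G.Subgraph, Sym2 B.verts → ℕ)
    (e : Sym2 V) : ℕ :=
  sInf {n | ∃ B, IsBlock G B ∧ ∃ e' ∈ B.coe.edgeSet, e'.map (↑) = e ∧ col B e' = n}

variable {col : ∀ B : G.Subgraph, Sym2 B.verts → ℕ}

lemma blockColoring_map_val {B : G.Subgraph} (hB : IsBlock G B) {e : Sym2 B.verts}
    (he : e ∈ B.coe.edgeSet) : blockColoring G col (e.map (↑)) = col B e := by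
  suffices hset : {n | ∃ B', IsBlock G B' ∧ ∃ e' ∈ B'.coe.edgeSet,
      e'.map Subtype.val = e.map Subtype.val ∧ col B' e' = n} = {col B e} by
    rw [blockColoring, hset, csInf_singleton]
  ext n
  constructor
  · rintro ⟨B', hB', e', -, he', rfl⟩
    obtain rfl := hB.eq_of_map_val_eq hB' he he'.symm
    rw [Sym2.map.injective Subtype.val_injective he']
    rfl
  · rintro rfl
    exact ⟨B, hB, e, he, rfl, rfl⟩

lemma blockColoring_lt [Finite V] {k : ℕ}
    (hk : ∀ B, IsBlock G B → ∀ e ∈ B.coe.edgeSet, col B e < k) :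
    ∀ e ∈ G.edgeSet, blockColoring G col e < k := by
  rintro ⟨a, b⟩ hab
  obtain ⟨B, hB, hBab⟩ := exists_isBlock_adj hab
  have he : s(⟨a, hBab.fst_mem⟩, ⟨b, hBab.snd_mem⟩) ∈ B.coe.edgeSet := hBab
  exact (blockColoring_map_val hB he).trans_lt (hk B hB _ he)

lemma IsProperSepCut.map_val_blockColoring {B : G.Subgraph} (hB : IsBlock G B)
    {F : Set (Sym2 B.verts)} {u v : B.verts} (hF : IsProperSepCut B.coe (col B) F u v) :
    IsProperSepCut G (blockColoring G col) (Sym2.map (↑) '' F) u v := by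
  obtain ⟨⟨hFB, huv⟩, hprop⟩ := hF
  refine ⟨⟨?_, fun h => huv (hB.reachable_deleteEdges h)⟩, ?_⟩
  · rintro _ ⟨e, he, rfl⟩
    exact B.map_val_mem_edgeSet (hFB he)
  · rintro _ ⟨e₁, he₁, rfl⟩ _ ⟨e₂, he₂, rfl⟩ hadj
    rw [blockColoring_map_val hB (hFB he₁), blockColoring_map_val hB (hFB he₂)]
    exact hprop e₁ he₁ e₂ he₂ ((edgesAdj_map_iff Subtype.val_injective).mp hadj)

lemma exists_isProperSepCut_blockColoring [Finite V]
    (hcol : ∀ B, IsBlock G B → ∀ u v : B.verts, u ≠ v →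
      ∃ F, IsProperSepCut B.coe (col B) F u v)
    {x y : V} (hxy : x ≠ y) : ∃ F, IsProperSepCut G (blockColoring G col) F x y := by
  by_cases hr : G.Reachable x y
  · obtain ⟨B, hB, u, hu, v, hv, huv, hW⟩ := exists_isBlock_forall_walk_mem_support hxy hr
    obtain ⟨F, hF⟩ := hcol B hB ⟨u, hu⟩ ⟨v, hv⟩ (by simpa using huv)
    obtain ⟨hsep, hprop⟩ := hF.map_val_blockColoring hB
    exact ⟨_, hsep.of_forall_walk_mem_support hW, hprop⟩
  · exact ⟨∅, ⟨Set.empty_subset _, by rwa [deleteEdges_empty]⟩, by simp⟩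

end Coloring

theorem stmt8_general {V : Type*} [Fintype V] (G : SimpleGraph V) :
    pd G = sSup {n : ℕ | ∃ H : G.Subgraph, IsBlock G H ∧ n = pd H.coe} := by
  have hle : ∀ n ∈ {n : ℕ | ∃ H : G.Subgraph, IsBlock G H ∧ n = pd H.coe}, n ≤ pd G := by
    rintro _ ⟨H, -, rfl⟩
    exact pd_coe_le G H
  refine le_antisymm ?_ (csSup_le' hle)
  choose col hcol_lt hcol_sep using fun B : G.Subgraph => exists_pd_coloring B.coe
  refine pd_le_of_coloring (blockColoring G col) (blockColoring_lt fun B hB e he => ?_)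
    fun x y hxy => exists_isProperSepCut_blockColoring (fun B _ => hcol_sep B) hxy
  exact (hcol_lt B e he).trans_le (le_csSup ⟨pd G, hle⟩ ⟨B, hB, rfl⟩)

theorem stmt8 {V : Type*} [Fintype V] (G : SimpleGraph V)
    (hconn : G.Connected) (hnt : Nontrivial V) :
    pd G = sSup {n : ℕ | ∃ H : G.Subgraph, IsBlock G H ∧ n = pd H.coe} :=
  stmt8_general G
end

section
/- Let G be a connected graph with maximum degree 2. Then pd(G) = 1 if and only if G is a path (of order at least 2) or a cycle of order at least 4, and pd(G) = 2 if and only if G is a triangle. -/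
open SimpleGraph

variable {V : Type*}

section Aux

variable {W W' : Type*}

/-- The defining set for `pd`. -/
def pdSet (G : SimpleGraph W) : Set ℕ :=
  {k | ∃ c : Sym2 W → ℕ, (∀ e ∈ G.edgeSet, c e < k) ∧
    ∀ x y : W, x ≠ y → ∃ F, IsProperSepCut G c F x y}

lemma pd_eq_sInf (G : SimpleGraph W) : pd G = sInf (pdSet G) := rfl

lemma pdSet_mono {G : SimpleGraph W} {k l : ℕ} (hk : k ∈ pdSet G) (hkl : k ≤ l) :
    l ∈ pdSet G := by
  obtain ⟨c, hc, hcut⟩ := hk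
  exact ⟨c, fun e he => lt_of_lt_of_le (hc e he) hkl, hcut⟩

lemma reach_closed {G : SimpleGraph W} {f : W → Prop}
    (hf : ∀ a b, G.Adj a b → f a → f b) :
    ∀ {x y : W}, G.Reachable x y → f x → f y := by
  intro x y h
  obtain ⟨w⟩ := h
  induction w with
  | nil => exact id
  | cons h p ih => exact fun hx => ih (hf _ _ h hx)

lemma reachable_map_adj {G : SimpleGraph W} {H : SimpleGraph W'} (f : W → W')
    (hf : ∀ a b, G.Adj a b → H.Adj (f a) (f b)) :
    ∀ {x y : W}, G.Reachable x y → H.Reachable (f x) (f y) := by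
  intro x y h
  obtain ⟨w⟩ := h
  induction w with
  | nil => exact Reachable.refl _
  | cons h p ih => exact (hf _ _ h).reachable.trans ih

lemma sep_of_closed {G : SimpleGraph W} {f : W → Prop}
    (hf : ∀ a b, G.Adj a b → f a → f b) {x y : W} (hx : f x) (hy : ¬ f y) :
    ¬ G.Reachable x y := fun h => hy (reach_closed hf h hx)

lemma pd_eq_zero {G : SimpleGraph W} (h0 : 0 ∈ pdSet G) : pd G = 0 :=
  Nat.le_zero.mp (Nat.sInf_le h0)

lemma pd_eq_one {G : SimpleGraph W} (h1 : 1 ∈ pdSet G) (h0 : 0 ∉ pdSet G) : pd G = 1 := by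
  have hle := Nat.sInf_le h1
  have hmem := Nat.sInf_mem (⟨1, h1⟩ : (pdSet G).Nonempty)
  rw [pd_eq_sInf]
  interval_cases h : sInf (pdSet G)
  · exact absurd (h ▸ hmem) h0
  · rfl

lemma pd_eq_two {G : SimpleGraph W} (h2 : 2 ∈ pdSet G) (h1 : 1 ∉ pdSet G)
    (h0 : 0 ∉ pdSet G) : pd G = 2 := by
  have hle := Nat.sInf_le h2
  have hmem := Nat.sInf_mem (⟨2, h2⟩ : (pdSet G).Nonempty)
  rw [pd_eq_sInf]
  interval_cases h : sInf (pdSet G)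
  · exact absurd (h ▸ hmem) h0
  · exact absurd (h ▸ hmem) h1
  · rfl

lemma zero_notMem_pdSet [Fintype W] {G : SimpleGraph W} (hconn : G.Connected)
    (hcard : 2 ≤ Fintype.card W) : 0 ∉ pdSet G := by
  rintro ⟨c, hc, hcut⟩
  obtain ⟨x, y, hxy⟩ := Fintype.exists_pair_of_one_lt_card (α := W) (by omega)
  obtain ⟨F, ⟨hFsub, hFreach⟩, -⟩ := hcut x y hxy
  have hF : F = ∅ := by
    ext e
    simp only [Set.mem_empty_iff_false, iff_false]
    exact fun he => absurd (hc e (hFsub he)) (Nat.not_lt_zero _)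
  rw [hF, deleteEdges_empty] at hFreach
  exact hFreach (hconn.preconnected x y)

end Aux

section Iso

variable {W W' : Type*}

lemma pdSet_subset_of_iso {G : SimpleGraph W} {H : SimpleGraph W'} (e : G ≃g H) :
    pdSet H ⊆ pdSet G := by
  rintro k ⟨c, hc, hcut⟩
  refine ⟨fun f => c (Sym2.map e f), ?_, ?_⟩
  · intro f hf
    refine hc _ ?_
    induction f with
    | _ a b =>
      rw [Sym2.map_pair_eq]
      rw [mem_edgeSet] at hf ⊢
      exact e.map_adj_iff.mpr hf
  · intro x y hxy
    obtain ⟨F', ⟨hF'sub, hF'reach⟩, hF'prop⟩ := hcut (e x) (e y) (fun h => hxy (e.injective h))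
    refine ⟨Sym2.map e ⁻¹' F', ⟨?_, ?_⟩, ?_⟩
    · intro f hf
      have := hF'sub hf
      induction f with
      | _ a b =>
        rw [Sym2.map_pair_eq, SimpleGraph.mem_edgeSet] at this
        rw [SimpleGraph.mem_edgeSet]
        exact e.map_adj_iff.mp this
    · intro hreach
      refine hF'reach ?_
      refine reachable_map_adj (⇑e) ?_ hreach
      intro a b hab
      rw [deleteEdges_adj] at hab ⊢
      refine ⟨e.map_adj_iff.mpr hab.1, ?_⟩
      have : Sym2.map e s(a, b) = s(e a, e b) := Sym2.map_pair_eq _ _ _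
      rw [← this]
      exact hab.2
    · intro e₁ he₁ e₂ he₂ hadj
      have hadj' : EdgesAdj (Sym2.map e e₁) (Sym2.map e e₂) := by
        obtain ⟨hne, v, hv1, hv2⟩ := hadj
        refine ⟨fun h => hne (Sym2.map.injective e.injective h), e v, ?_, ?_⟩
        · exact Sym2.mem_map.mpr ⟨v, hv1, rfl⟩
        · exact Sym2.mem_map.mpr ⟨v, hv2, rfl⟩
      exact hF'prop _ he₁ _ he₂ hadj'

lemma pd_iso {G : SimpleGraph W} {H : SimpleGraph W'} (e : G ≃g H) : pd G = pd H := by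
  rw [pd_eq_sInf, pd_eq_sInf]
  have h1 := pdSet_subset_of_iso e
  have h2 := pdSet_subset_of_iso e.symm
  rw [Set.Subset.antisymm h2 h1]

end Iso

section PathCycle

lemma IsProperSepCut.symm {W : Type*} {G : SimpleGraph W} {c : Sym2 W → ℕ}
    {F : Set (Sym2 W)} {x y : W} (h : IsProperSepCut G c F x y) :
    IsProperSepCut G c F y x :=
  ⟨⟨h.1.1, fun hr => h.1.2 hr.symm⟩, h.2⟩

lemma pathGraph_cut {n : ℕ} {x y : Fin n} (hxy : x.val < y.val) :
    IsProperSepCut (pathGraph n) (fun _ => 0) {s(x, ⟨x.val + 1, lt_of_le_of_lt hxy y.isLt⟩)} x y := by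
  set x' : Fin n := ⟨x.val + 1, lt_of_le_of_lt hxy y.isLt⟩ with hx'
  refine ⟨⟨?_, ?_⟩, ?_⟩
  · intro f hf
    rw [Set.mem_singleton_iff] at hf
    subst hf
    rw [SimpleGraph.mem_edgeSet, pathGraph_adj]
    left; rfl
  · refine sep_of_closed (f := fun z => z.val ≤ x.val) ?_ le_rfl (by omega)
    intro a b hab ha
    rw [deleteEdges_adj] at hab
    obtain ⟨hadj, hne⟩ := hab
    rw [pathGraph_adj] at hadj
    rcases hadj with h | h
    · -- b = a + 1
      rcases Nat.lt_or_ge a.val x.val with h2 | h2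
      · omega
      · exfalso
        apply hne
        rw [Set.mem_singleton_iff]
        have hax : a = x := Fin.ext (le_antisymm ha h2)
        have hbx : b = x' := Fin.ext (by rw [hx']; simp [← h, hax])
        rw [hax, hbx]
    · omega
  · intro e₁ he₁ e₂ he₂ hadj
    rw [Set.mem_singleton_iff] at he₁ he₂
    exact absurd (he₁.trans he₂.symm) hadj.1

lemma one_mem_pdSet_pathGraph (n : ℕ) : 1 ∈ pdSet (pathGraph n) := by
  refine ⟨fun _ => 0, fun e _ => Nat.zero_lt_one, ?_⟩
  intro x y hxy
  rcases Nat.lt_or_ge x.val y.val with h | h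
  · exact ⟨_, pathGraph_cut h⟩
  · have h2 : y.val < x.val := lt_of_le_of_ne h (fun he => hxy (Fin.ext he.symm))
    exact ⟨_, (pathGraph_cut h2).symm⟩

lemma pd_pathGraph {n : ℕ} (hn : 2 ≤ n) : pd (pathGraph n) = 1 := by
  refine pd_eq_one (one_mem_pdSet_pathGraph n) ?_
  obtain ⟨m, rfl⟩ : ∃ m, n = m + 1 := ⟨n - 1, by omega⟩
  exact zero_notMem_pdSet (pathGraph_connected m) (by simpa using hn)

lemma pd_pathGraph_one : pd (pathGraph 1) = 0 := by
  refine pd_eq_zero ⟨fun _ => 0, ?_, ?_⟩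
  · intro e he
    exfalso
    induction e with
    | _ a b =>
      rw [SimpleGraph.mem_edgeSet, pathGraph_adj] at he
      omega
  · intro x y hxy
    exact absurd (Subsingleton.elim x y) hxy

end PathCycle

section Cycle

lemma cycle_val_adj {n : ℕ} (hn : 2 ≤ n) (u v : Fin n) :
    (cycleGraph n).Adj u v ↔ (u.val = (v.val + 1) % n ∨ v.val = (u.val + 1) % n) := by
  rw [cycleGraph_adj']
  have key : ∀ a b : Fin n, (a - b).val = 1 ↔ a.val = (b.val + 1) % n := by
    intro a b
    rw [Fin.sub_def]
    simp only
    have hb := b.isLt; have ha := a.isLt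
    rcases Nat.lt_or_ge b.val (n - 1) with hb1 | hb1
    · rw [Nat.mod_eq_of_lt (by omega : b.val + 1 < n)]
      rcases Nat.lt_or_ge b.val a.val with h | h
      · have he : n - b.val + a.val = n + (a.val - b.val) := by omega
        rw [he, Nat.add_mod_left, Nat.mod_eq_of_lt (by omega)]
        omega
      · rcases (by omega : n - b.val + a.val < n ∨ n - b.val + a.val = n) with h3 | h3
        · rw [Nat.mod_eq_of_lt h3]; omega
        · rw [h3, Nat.mod_self]; omega
    · have h0 : (b.val + 1) % n = 0 := by
        rw [show b.val + 1 = n by omega, Nat.mod_self]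
      rw [h0, show n - b.val = 1 by omega]
      rcases Nat.lt_or_ge a.val (n - 1) with h2 | h2
      · rw [Nat.mod_eq_of_lt (by omega)]; omega
      · rw [show 1 + a.val = n by omega, Nat.mod_self]; omega
  rw [key, key]

lemma cycleGraph_cut {n p q : ℕ} (hn : 4 ≤ n) (hpq : p + 1 < q) (hq : q < n)
    (hw : ¬(p = 0 ∧ q = n - 1)) {x y : Fin n}
    (hy : p < y.val ∧ y.val ≤ q) (hx : ¬(p < x.val ∧ x.val ≤ q)) :
    IsProperSepCut (cycleGraph n) (fun _ => 0)
      {s((⟨p, by omega⟩ : Fin n), (⟨p + 1, by omega⟩ : Fin n)),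
       s((⟨q, hq⟩ : Fin n), (⟨(q + 1) % n, Nat.mod_lt _ (by omega)⟩ : Fin n))} x y := by
  have hn2 : 2 ≤ n := by omega
  set P : Fin n := ⟨p, by omega⟩
  set P1 : Fin n := ⟨p + 1, by omega⟩
  set Q : Fin n := ⟨q, hq⟩
  set Q1 : Fin n := ⟨(q + 1) % n, Nat.mod_lt _ (by omega)⟩
  refine ⟨⟨?_, ?_⟩, ?_⟩
  · intro f hf
    rcases hf with hf | hf
    · subst hf
      rw [SimpleGraph.mem_edgeSet, cycle_val_adj hn2]
      right
      show P1.val = (P.val + 1) % n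
      simp only [P, P1]
      rw [Nat.mod_eq_of_lt (by omega)]
    · rw [Set.mem_singleton_iff] at hf
      subst hf
      rw [SimpleGraph.mem_edgeSet, cycle_val_adj hn2]
      right
      rfl
  · intro hreach
    have := reach_closed (G := (cycleGraph n).deleteEdges _)
      (f := fun z : Fin n => p < z.val ∧ z.val ≤ q) ?_ hreach.symm hy
    · exact hx this
    · intro a b hab ha
      rw [deleteEdges_adj] at hab
      obtain ⟨hadj, hne⟩ := hab
      rw [cycle_val_adj hn2] at hadj
      rcases hadj with h | h
      · -- a = b + 1 (mod n)
        rcases Nat.lt_or_ge b.val (n - 1) with h2 | h2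
        · rw [Nat.mod_eq_of_lt (by omega)] at h
          rcases eq_or_ne a.val (p + 1) with h3 | h3
          case inr => constructor <;> omega
          · exfalso
            apply hne
            left
            have hap : a = P1 := Fin.ext h3
            have hbp : b = P := Fin.ext (by simp only [P]; omega)
            rw [hap, hbp, Sym2.eq_swap]
        · rw [show b.val + 1 = n by omega, Nat.mod_self] at h
          omega
      · -- b = a + 1 (mod n)
        rcases eq_or_ne a.val q with h2 | h2
        case inr =>
          have hb : b.val = a.val + 1 := by
            rw [h, Nat.mod_eq_of_lt (by omega)]
          constructor <;> omega
        · exfalso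
          apply hne
          right
          rw [Set.mem_singleton_iff]
          have hap : a = Q := Fin.ext h2
          have hbp : b = Q1 := Fin.ext (by simp only [Q1]; rw [h, h2])
          rw [hap, hbp]
  · intro e₁ he₁ e₂ he₂ hadj
    exfalso
    have hvals : ∀ v : Fin n, v ∈ (s(P, P1) : Sym2 (Fin n)) → v.val = p ∨ v.val = p + 1 := by
      intro v hv
      rw [Sym2.mem_iff] at hv
      rcases hv with h | h <;> [left; right] <;> rw [h]
    have hvals2 : ∀ v : Fin n, v ∈ (s(Q, Q1) : Sym2 (Fin n)) →
        v.val = q ∨ v.val = (q + 1) % n := by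
      intro v hv
      rw [Sym2.mem_iff] at hv
      rcases hv with h | h <;> [left; right] <;> rw [h]
    have hr : (q + 1) % n = q + 1 ∨ ((q + 1) % n = 0 ∧ q = n - 1) := by
      rcases Nat.lt_or_ge q (n - 1) with h | h
      · left; rw [Nat.mod_eq_of_lt (by omega)]
      · right
        constructor
        · rw [show q + 1 = n by omega, Nat.mod_self]
        · omega
    obtain ⟨hne, v, hv1, hv2⟩ := hadj
    simp only [Set.mem_insert_iff, Set.mem_singleton_iff] at he₁ he₂
    rcases he₁ with h1 | h1 <;> rcases he₂ with h2 | h2 <;> subst h1 <;> subst h2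
    · exact hne rfl
    · have := hvals v hv1
      have := hvals2 v hv2
      rcases hr with hr | ⟨hr, hq'⟩
      · omega
      · exact hw (by omega)
    · have := hvals v hv2
      have := hvals2 v hv1
      rcases hr with hr | ⟨hr, hq'⟩
      · omega
      · exact hw (by omega)
    · exact hne rfl

end Cycle

lemma one_mem_pdSet_cycleGraph {n : ℕ} (hn : 4 ≤ n) : 1 ∈ pdSet (cycleGraph n) := by
  refine ⟨fun _ => 0, fun e _ => Nat.zero_lt_one, ?_⟩
  have main : ∀ x y : Fin n, x.val < y.val → ∃ F, IsProperSepCut (cycleGraph n) (fun _ => 0) F x y := by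
    intro x y hxy
    have hyn := y.isLt
    rcases Nat.lt_or_ge y.val (n - 1) with hb | hb
    · -- y.val ≤ n - 2
      rcases eq_or_ne y.val (x.val + 1) with hd | hd
      · -- (p, q) = (x, y + 1)
        exact ⟨_, cycleGraph_cut hn (p := x.val) (q := y.val + 1) (by omega) (by omega)
          (by omega) (by omega) (by omega)⟩
      · exact ⟨_, cycleGraph_cut hn (p := x.val) (q := y.val) (by omega) (by omega)
          (by omega) (by omega) (by omega)⟩
    · -- y.val = n - 1
      rcases eq_or_ne x.val 0 with hx0 | hx0
      · exact ⟨_, cycleGraph_cut hn (p := 1) (q := n - 1) (by omega) (by omega)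
          (by omega) (by omega) (by omega)⟩
      · rcases eq_or_ne x.val (n - 2) with hx2 | hx2
        · exact ⟨_, (cycleGraph_cut hn (p := n - 4) (q := n - 2) (by omega) (by omega)
            (by omega) (x := y) (y := x) (by omega) (by omega)).symm⟩
        · exact ⟨_, cycleGraph_cut hn (p := x.val) (q := n - 1) (by omega) (by omega)
            (by omega) (by omega) (by omega)⟩
  intro x y hxy
  rcases Nat.lt_or_ge x.val y.val with h | h
  · exact main x y h
  · have h2 : y.val < x.val := lt_of_le_of_ne h (fun he => hxy (Fin.ext he.symm))
    obtain ⟨F, hF⟩ := main y x h2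
    exact ⟨F, hF.symm⟩

lemma pd_cycleGraph {n : ℕ} (hn : 4 ≤ n) : pd (cycleGraph n) = 1 := by
  refine pd_eq_one (one_mem_pdSet_cycleGraph hn) ?_
  obtain ⟨m, rfl⟩ : ∃ m, n = m + 1 := ⟨n - 1, by omega⟩
  exact zero_notMem_pdSet cycleGraph_connected (by simpa using by omega : 2 ≤ Fintype.card (Fin (m + 1)))

section C3

lemma c3_cut (v w : Fin 3) (hv : v ≠ 2) (hw : w ≠ v) :
    IsProperSepCut (cycleGraph 3) (fun e => if e = s(0, 1) then 0 else 1)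
      {s(v, v + 1), s(v, v + 2)} v w := by
  refine ⟨⟨?_, ?_⟩, ?_⟩
  · intro f hf
    rcases hf with hf | hf
    · subst hf
      rw [SimpleGraph.mem_edgeSet]
      revert hv; fin_cases v <;> decide
    · rw [Set.mem_singleton_iff] at hf
      subst hf
      rw [SimpleGraph.mem_edgeSet]
      revert hv; fin_cases v <;> decide
  · refine sep_of_closed (f := fun z => z = v) ?_ rfl hw
    intro a b hab ha
    subst ha
    rw [deleteEdges_adj] at hab
    obtain ⟨hadj, hne⟩ := hab
    by_contra hb
    apply hne
    have hb' : b = a + 1 ∨ b = a + 2 := by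
      revert hadj hb; fin_cases a <;> fin_cases b <;> decide
    rcases hb' with hb' | hb'
    · left; rw [hb']
    · right; rw [Set.mem_singleton_iff, hb']
  · intro e₁ he₁ e₂ he₂ hadj
    simp only [Set.mem_insert_iff, Set.mem_singleton_iff] at he₁ he₂
    rcases he₁ with h1 | h1 <;> rcases he₂ with h2 | h2 <;> subst h1 <;> subst h2
    · exact absurd rfl hadj.1
    · revert hv; fin_cases v <;> decide
    · revert hv; fin_cases v <;> decide
    · exact absurd rfl hadj.1

lemma two_mem_pdSet_c3 : 2 ∈ pdSet (cycleGraph 3) := by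
  refine ⟨fun e => if e = s(0, 1) then 0 else 1, ?_, ?_⟩
  · intro e _
    dsimp only
    split <;> omega
  · intro x y hxy
    rcases eq_or_ne x 2 with hx | hx
    · have hy : y ≠ 2 := fun h => hxy (hx.trans h.symm)
      exact ⟨_, (c3_cut y x hy hxy).symm⟩
    · exact ⟨_, c3_cut x y hx (Ne.symm hxy)⟩

lemma one_notMem_pdSet_c3 : 1 ∉ pdSet (cycleGraph 3) := by
  rintro ⟨c, hc, hcut⟩
  obtain ⟨F, ⟨hFsub, hFreach⟩, hFprop⟩ := hcut 0 1 (by decide)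
  have hsub : ∀ e₁ ∈ F, ∀ e₂ ∈ F, e₁ = e₂ := by
    intro e1 h1 e2 h2
    by_contra hne
    have h1' := hFsub h1
    have h2' := hFsub h2
    have key : ∀ a b a' b' : Fin 3, a ≠ b → a' ≠ b' →
        ∃ v, v ∈ (s(a, b) : Sym2 (Fin 3)) ∧ v ∈ (s(a', b') : Sym2 (Fin 3)) := by decide
    have hadj : EdgesAdj e1 e2 := by
      refine ⟨hne, ?_⟩
      induction e1 with
      | _ a b =>
        induction e2 with
        | _ a' b' =>
          rw [SimpleGraph.mem_edgeSet] at h1' h2'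
          exact key a b a' b' h1'.ne h2'.ne
    have := hFprop e1 h1 e2 h2 hadj
    have c1 := hc e1 (hFsub h1)
    have c2 := hc e2 (hFsub h2)
    omega
  apply hFreach
  by_cases hF : F = ∅
  · rw [hF, deleteEdges_empty]
    exact cycleGraph_connected.preconnected 0 1
  · obtain ⟨e0, he0⟩ := Set.nonempty_iff_ne_empty.mpr hF
    have hFe : F ⊆ {e0} := fun e he => Set.mem_singleton_iff.mpr (hsub e he e0 he0)
    refine Reachable.mono (deleteEdges_anti hFe) ?_
    rcases eq_or_ne e0 s(0, 1) with h | h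
    · have h1 : ((cycleGraph 3).deleteEdges {e0}).Adj 0 2 := by
        rw [deleteEdges_adj, Set.mem_singleton_iff]
        subst h
        exact ⟨by decide, by decide⟩
      have h2 : ((cycleGraph 3).deleteEdges {e0}).Adj 2 1 := by
        rw [deleteEdges_adj, Set.mem_singleton_iff]
        subst h
        exact ⟨by decide, by decide⟩
      exact h1.reachable.trans h2.reachable
    · have h1 : ((cycleGraph 3).deleteEdges {e0}).Adj 0 1 := by
        rw [deleteEdges_adj, Set.mem_singleton_iff]
        exact ⟨by decide, Ne.symm h⟩
      exact h1.reachable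

lemma pd_c3 : pd (cycleGraph 3) = 2 := by
  refine pd_eq_two two_mem_pdSet_c3 one_notMem_pdSet_c3 ?_
  exact zero_notMem_pdSet cycleGraph_connected (by simp)

end C3

section Classify

open SimpleGraph.Walk

variable {W : Type*}

lemma getVert_injOn_of_isPath {G : SimpleGraph W} {u v : W} {p : G.Walk u v} (hp : p.IsPath) :
    ∀ i ≤ p.length, ∀ j ≤ p.length, p.getVert i = p.getVert j → i = j := by
  induction p with
  | nil =>
    intro i hi j hj _
    simp only [Walk.length_nil] at hi hj
    omega
  | cons h q ih =>
    rw [Walk.cons_isPath_iff] at hp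
    intro i hi j hj heq
    match i, j with
    | 0, 0 => rfl
    | 0, j + 1 =>
      rw [Walk.getVert_zero, Walk.getVert_cons_succ] at heq
      exfalso
      exact hp.2 (Walk.mem_support_iff_exists_getVert.mpr
        ⟨j, heq.symm, by simpa using Nat.succ_le_succ_iff.mp hj⟩)
    | i + 1, 0 =>
      rw [Walk.getVert_zero, Walk.getVert_cons_succ] at heq
      exfalso
      exact hp.2 (Walk.mem_support_iff_exists_getVert.mpr
        ⟨i, heq, by simpa using Nat.succ_le_succ_iff.mp hi⟩)
    | i + 1, j + 1 =>
      rw [Walk.getVert_cons_succ, Walk.getVert_cons_succ] at heq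
      have := ih hp.1 i (by simpa using Nat.succ_le_succ_iff.mp hi) j
        (by simpa using Nat.succ_le_succ_iff.mp hj) heq
      omega

lemma not_three_neighbors [Fintype W] {G : SimpleGraph W} [DecidableRel G.Adj]
    (hdeg : ∀ z, G.degree z ≤ 2) {b a1 a2 a3 : W} (h1 : G.Adj b a1) (h2 : G.Adj b a2)
    (h3 : G.Adj b a3) (h12 : a1 ≠ a2) (h13 : a1 ≠ a3) (h23 : a2 ≠ a3) : False := by
  classical
  have hsub : ({a1, a2, a3} : Finset W) ⊆ G.neighborFinset b := by
    intro z hz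
    rw [Finset.mem_insert, Finset.mem_insert, Finset.mem_singleton] at hz
    rw [SimpleGraph.mem_neighborFinset]
    rcases hz with h | h | h <;> subst h <;> assumption
  have hcard : ({a1, a2, a3} : Finset W).card = 3 := by
    rw [Finset.card_insert_of_notMem (by simp [h12, h13]),
      Finset.card_insert_of_notMem (by simp [h23]), Finset.card_singleton]
  have hle : 3 ≤ G.degree b := by
    rw [← hcard]
    exact Finset.card_le_card hsub
  have := hdeg b
  omega

lemma exists_crossing {G : SimpleGraph W} {f : W → Prop} :
    ∀ {x y : W}, G.Walk x y → ¬ f x → f y → ∃ a b, G.Adj a b ∧ ¬ f a ∧ f b := by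
  intro x y q
  induction q with
  | nil => intro hx hy; exact absurd hy hx
  | @cons x z y h q ih =>
    intro hx hy
    by_cases hz : f z
    · exact ⟨x, z, h, hx, hz⟩
    · exact ih hz hy

lemma interior_two_neighbors [DecidableEq W] {G : SimpleGraph W} {u v b : W} {p : G.Walk u v}
    (hp : p.IsPath) (hb : b ∈ p.support) (hbu : b ≠ u) (hbv : b ≠ v) :
    ∃ x1 x2, G.Adj b x1 ∧ G.Adj b x2 ∧ x1 ≠ x2 ∧ x1 ∈ p.support ∧ x2 ∈ p.support := by
  set q := p.takeUntil b hb with hqdef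
  set r := p.dropUntil b hb with hrdef
  have hq : q.IsPath := hp.takeUntil hb
  have hr : r.IsPath := hp.dropUntil hb
  have hqrn : ¬ q.reverse.Nil := Walk.not_nil_of_ne hbu
  have hrn : ¬ r.Nil := Walk.not_nil_of_ne hbv
  set x1 := q.reverse.getVert 1 with hx1def
  set x2 := r.getVert 1 with hx2def
  have hadj1 : G.Adj b x1 := Walk.adj_snd hqrn
  have hadj2 : G.Adj b x2 := Walk.adj_snd hrn
  have hlen1 : 1 ≤ q.reverse.length := by rwa [Walk.not_nil_iff_lt_length] at hqrn
  have hlen2 : 1 ≤ r.length := by rwa [Walk.not_nil_iff_lt_length] at hrn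
  have hx1q : x1 ∈ q.support := by
    have : x1 ∈ q.reverse.support := Walk.mem_support_iff_exists_getVert.mpr ⟨1, rfl, hlen1⟩
    rwa [Walk.support_reverse, List.mem_reverse] at this
  have hx2r : x2 ∈ r.support := Walk.mem_support_iff_exists_getVert.mpr ⟨1, rfl, hlen2⟩
  have hx1b : x1 ≠ b := by
    intro h
    have : q.reverse.getVert 1 = q.reverse.getVert 0 := by
      rw [Walk.getVert_zero]; exact h
    exact absurd (getVert_injOn_of_isPath hq.reverse 1 hlen1 0 (Nat.zero_le _) this) one_ne_zero
  have hx2b : x2 ≠ b := by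
    intro h
    have : r.getVert 1 = r.getVert 0 := by rw [Walk.getVert_zero]; exact h
    exact absurd (getVert_injOn_of_isPath hr 1 hlen2 0 (Nat.zero_le _) this) one_ne_zero
  have hx2tail : x2 ∈ r.support.tail := by
    have := hx2r
    rw [Walk.support_eq_cons] at this
    rcases List.mem_cons.mp this with h | h
    · exact absurd h hx2b
    · exact h
  have hnodup : (q.support ++ r.support.tail).Nodup := by
    have hps := hp.support_nodup
    rwa [← Walk.take_spec p hb, Walk.support_append] at hps
  have hx12 : x1 ≠ x2 := by
    intro h
    exact List.disjoint_of_nodup_append hnodup hx1q (h ▸ hx2tail)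
  refine ⟨x1, x2, hadj1, hadj2, hx12, ?_, ?_⟩
  · exact Walk.support_takeUntil_subset p hb hx1q
  · exact Walk.support_dropUntil_subset p hb hx2r

end Classify

section Classify2

variable {W : Type*}

lemma exists_hamiltonian_path [Fintype W] [DecidableEq W] {G : SimpleGraph W}
    [DecidableRel G.Adj] (hconn : G.Connected) (hdeg : ∀ z, G.degree z ≤ 2) :
    ∃ (u v : W) (p : G.Walk u v), p.IsPath ∧ ∀ w, w ∈ p.support := by
  have hne : Nonempty W := hconn.nonempty
  obtain ⟨x⟩ := hne
  set L : Set ℕ := {l : ℕ | ∃ (u v : W) (p : G.Walk u v), p.IsPath ∧ p.length = l} with hL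
  have h0 : 0 ∈ L := ⟨x, x, Walk.nil, Walk.IsPath.nil, rfl⟩
  have hbdd : BddAbove L := by
    refine ⟨Fintype.card W, ?_⟩
    rintro l ⟨u, v, p, hp, rfl⟩
    exact le_of_lt hp.length_lt
  have hm : sSup L ∈ L := Nat.sSup_mem ⟨0, h0⟩ hbdd
  obtain ⟨u, v, p, hp, hlen⟩ := hm
  refine ⟨u, v, p, hp, ?_⟩
  by_contra hcov
  push_neg at hcov
  obtain ⟨w, hw⟩ := hcov
  obtain ⟨q⟩ := hconn.preconnected w u
  obtain ⟨a, b, hab, hna, hb⟩ := exists_crossing (f := fun z => z ∈ p.support) q hw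
    (Walk.start_mem_support p)
  have hmax : ∀ l ∈ L, l ≤ p.length := by
    intro l hl
    rw [hlen]
    exact le_csSup hbdd hl
  rcases eq_or_ne b u with hbu | hbu
  · subst hbu
    have hp' : (p.cons hab).IsPath := hp.cons hna
    have := hmax (p.cons hab).length ⟨a, v, p.cons hab, hp', rfl⟩
    simp only [Walk.length_cons] at this
    omega
  rcases eq_or_ne b v with hbv | hbv
  · have hab' : G.Adj a v := hbv ▸ hab
    have hp' : (p.reverse.cons hab').IsPath := by
      refine hp.reverse.cons ?_
      rwa [Walk.support_reverse, List.mem_reverse]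
    have := hmax (p.reverse.cons hab').length ⟨a, u, p.reverse.cons hab', hp', rfl⟩
    simp only [Walk.length_cons, Walk.length_reverse] at this
    omega
  · obtain ⟨x1, x2, h1, h2, h12, hx1p, hx2p⟩ := interior_two_neighbors hp hb hbu hbv
    exact not_three_neighbors hdeg (hab.symm) h1 h2
      (fun h => hna (h ▸ hx1p)) (fun h => hna (h ▸ hx2p)) h12

lemma no_chord [Fintype W] {G : SimpleGraph W} [DecidableRel G.Adj]
    (hdeg : ∀ z, G.degree z ≤ 2) {u v : W} {p : G.Walk u v} (hp : p.IsPath)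
    {i j : ℕ} (hij : i + 1 < j) (hj : j ≤ p.length)
    (hadj : G.Adj (p.getVert i) (p.getVert j)) : i = 0 ∧ j = p.length := by
  have hinj := getVert_injOn_of_isPath hp
  constructor
  · by_contra hi0
    -- i ≥ 1 : three neighbors of getVert i
    have hi1 : 1 ≤ i := Nat.one_le_iff_ne_zero.mpr hi0
    have ha0 := p.adj_getVert_succ (i := i - 1) (by omega)
    rw [Nat.sub_add_cancel hi1] at ha0
    have ha1 : G.Adj (p.getVert i) (p.getVert (i - 1)) := ha0.symm
    have ha2 : G.Adj (p.getVert i) (p.getVert (i + 1)) := p.adj_getVert_succ (by omega)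
    exact not_three_neighbors hdeg ha1 ha2 hadj
      (fun h => by have := hinj _ (by omega) _ (by omega) h; omega)
      (fun h => by have := hinj _ (by omega) _ (by omega) h; omega)
      (fun h => by have := hinj _ (by omega) _ (by omega) h; omega)
  · by_contra hjm
    have hjm' : j < p.length := lt_of_le_of_ne hj hjm
    have ha0 := p.adj_getVert_succ (i := j - 1) (by omega)
    rw [Nat.sub_add_cancel (by omega : 1 ≤ j)] at ha0
    have ha1 : G.Adj (p.getVert j) (p.getVert (j - 1)) := ha0.symm
    have ha2 : G.Adj (p.getVert j) (p.getVert (j + 1)) := p.adj_getVert_succ (by omega)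
    exact not_three_neighbors hdeg ha1 ha2 hadj.symm
      (fun h => by have := hinj _ (by omega) _ (by omega) h; omega)
      (fun h => by have := hinj _ (by omega) _ (by omega) h; omega)
      (fun h => by have := hinj _ (by omega) _ (by omega) h; omega)

end Classify2

theorem classification {W : Type*} [Fintype W] (G : SimpleGraph W) [DecidableRel G.Adj]
    (hconn : G.Connected) (hdeg : ∀ z, G.degree z ≤ 2) :
    Nonempty (G ≃g pathGraph (Fintype.card W)) ∨
      (3 ≤ Fintype.card W ∧ Nonempty (G ≃g cycleGraph (Fintype.card W))) := by
  classical
  obtain ⟨u, v, p, hp, hall⟩ := exists_hamiltonian_path hconn hdeg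
  set n := Fintype.card W with hn
  have hinj := getVert_injOn_of_isPath hp
  have hlen : p.length + 1 = n := by
    have h1 : p.support.toFinset = Finset.univ :=
      Finset.eq_univ_iff_forall.mpr (fun w => List.mem_toFinset.mpr (hall w))
    have h2 : p.support.toFinset.card = n := by rw [h1, Finset.card_univ]
    rwa [List.toFinset_card_of_nodup hp.support_nodup, Walk.length_support] at h2
  set g : Fin n → W := fun i => p.getVert i.val with hg
  have hginj : Function.Injective g := by
    intro i j hij
    exact Fin.ext (hinj i.val (by omega) j.val (by omega) hij)
  have hgbij : Function.Bijective g :=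
    (Fintype.bijective_iff_injective_and_card g).mpr ⟨hginj, by simp [hn]⟩
  set E := Equiv.ofBijective g hgbij with hE
  have hgE : ∀ w, g (E.symm w) = w := fun w => E.apply_symm_apply w
  have hconsec : ∀ i j : Fin n, j.val = i.val + 1 → G.Adj (g i) (g j) := by
    intro i j hij
    have h2 := p.adj_getVert_succ (i := i.val) (by omega)
    rw [← hij] at h2
    exact h2
  have hchord : ∀ i j : Fin n, i.val + 1 < j.val → G.Adj (g i) (g j) →
      i.val = 0 ∧ j.val = p.length := by
    intro i j hij hadj
    exact no_chord hdeg hp hij (by omega) hadj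
  have hstep : ∀ i j : Fin n, i.val < j.val → G.Adj (g i) (g j) →
      j.val = i.val + 1 ∨ (i.val = 0 ∧ j.val = p.length ∧ 3 ≤ n) := by
    intro i j hij hadj
    rcases eq_or_ne j.val (i.val + 1) with h | h
    · exact Or.inl h
    · have h2 := hchord i j (by omega) hadj
      exact Or.inr ⟨h2.1, h2.2, by omega⟩
  by_cases hcase : G.Adj (p.getVert 0) (p.getVert p.length) ∧ 3 ≤ n
  · right
    refine ⟨hcase.2, ?_⟩
    have hfwd : ∀ i j : Fin n, j.val = (i.val + 1) % n → G.Adj (g i) (g j) := by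
      intro i j hij
      rcases Nat.lt_or_ge (i.val + 1) n with h | h
      · rw [Nat.mod_eq_of_lt h] at hij
        exact hconsec i j hij
      · have hi : i.val = p.length := by omega
        have hj0 : j.val = 0 := by rw [hij, show i.val + 1 = n by omega, Nat.mod_self]
        have h3 : G.Adj (p.getVert j.val) (p.getVert i.val) := by
          rw [hi, hj0]
          exact hcase.1
        exact h3.symm
    have hadj_iff : ∀ i j : Fin n, (cycleGraph n).Adj i j ↔ G.Adj (g i) (g j) := by
      intro i j
      rw [cycle_val_adj (by omega)]
      constructor
      · rintro (h | h)
        · exact (hfwd j i h).symm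
        · exact hfwd i j h
      · intro hadj
        rcases lt_trichotomy i.val j.val with h | h | h
        · rcases hstep i j h hadj with h1 | ⟨h1, h2, _⟩
          · right; rw [h1, Nat.mod_eq_of_lt (by omega)]
          · left; rw [h1, h2, show p.length + 1 = n from hlen, Nat.mod_self]
        · have hij : i = j := Fin.ext h
          subst hij
          exact absurd rfl hadj.ne
        · rcases hstep j i h hadj.symm with h1 | ⟨h1, h2, _⟩
          · left; rw [h1, Nat.mod_eq_of_lt (by omega)]
          · right; rw [h1, h2, show p.length + 1 = n from hlen, Nat.mod_self]
    exact ⟨⟨E.symm, fun {a b} => by rw [hadj_iff (E.symm a) (E.symm b), hgE a, hgE b]⟩⟩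
  · left
    have hadj_iff : ∀ i j : Fin n, (pathGraph n).Adj i j ↔ G.Adj (g i) (g j) := by
      intro i j
      rw [pathGraph_adj]
      constructor
      · rintro (h | h)
        · exact hconsec i j h.symm
        · exact (hconsec j i h.symm).symm
      · intro hadj
        rcases lt_trichotomy i.val j.val with h | h | h
        · rcases hstep i j h hadj with h1 | ⟨h1, h2, h3⟩
          · left; omega
          · exfalso
            apply hcase
            refine ⟨?_, h3⟩
            have h4 : G.Adj (p.getVert i.val) (p.getVert j.val) := hadj
            rwa [h1, h2] at h4
        · have hij : i = j := Fin.ext h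
          subst hij
          exact absurd rfl hadj.ne
        · rcases hstep j i h hadj.symm with h1 | ⟨h1, h2, h3⟩
          · right; omega
          · exfalso
            apply hcase
            refine ⟨?_, h3⟩
            have h4 : G.Adj (p.getVert j.val) (p.getVert i.val) := hadj.symm
            rwa [h1, h2] at h4
    exact ⟨⟨E.symm, fun {a b} => by rw [hadj_iff (E.symm a) (E.symm b), hgE a, hgE b]⟩⟩

theorem stmt10 {V : Type*} [Fintype V] (G : SimpleGraph V) [DecidableRel G.Adj]
    (hconn : G.Connected) (hdeg : G.maxDegree ≤ 2) :
    (pd G = 1 ↔ (∃ n : ℕ, 2 ≤ n ∧ Nonempty (G ≃g SimpleGraph.pathGraph n)) ∨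
        (∃ n : ℕ, 4 ≤ n ∧ Nonempty (G ≃g SimpleGraph.cycleGraph n))) ∧
      (pd G = 2 ↔ Nonempty (G ≃g SimpleGraph.cycleGraph 3)) := by
  have hdeg2 : ∀ z, G.degree z ≤ 2 := fun z => le_trans (G.degree_le_maxDegree z) hdeg
  have hcls := classification G hconn hdeg2
  set n := Fintype.card V with hn
  have hn1 : 1 ≤ n := Fintype.card_pos_iff.mpr hconn.nonempty
  constructor
  · constructor
    · intro hpd
      rcases hcls with ⟨⟨e⟩⟩ | ⟨h3, ⟨e⟩⟩
      · left
        refine ⟨n, ?_, ⟨e⟩⟩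
        by_contra hn2
        push_neg at hn2
        have hone : n = 1 := by omega
        have h0 : pd G = 0 := by
          rw [pd_iso (hone ▸ e)]
          exact pd_pathGraph_one
        omega
      · rcases eq_or_ne n 3 with h | h
        · exfalso
          have h2 : pd G = 2 := by
            rw [pd_iso (h ▸ e)]
            exact pd_c3
          omega
        · exact Or.inr ⟨n, by omega, ⟨e⟩⟩
    · rintro (⟨m, hm, ⟨e⟩⟩ | ⟨m, hm, ⟨e⟩⟩)
      · rw [pd_iso e]; exact pd_pathGraph hm
      · rw [pd_iso e]; exact pd_cycleGraph hm
  · constructor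
    · intro hpd
      rcases hcls with ⟨⟨e⟩⟩ | ⟨h3, ⟨e⟩⟩
      · exfalso
        rcases eq_or_ne n 1 with h | h
        · have h0 : pd G = 0 := by
            rw [pd_iso (h ▸ e)]
            exact pd_pathGraph_one
          omega
        · have h1 : pd G = 1 := by
            rw [pd_iso e]
            exact pd_pathGraph (by omega)
          omega
      · rcases eq_or_ne n 3 with h | h
        · exact ⟨h ▸ e⟩
        · exfalso
          have h1 : pd G = 1 := by
            rw [pd_iso e]
            exact pd_cycleGraph (by omega)
          omega
    · rintro ⟨e⟩
      rw [pd_iso e]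
      exact pd_c3
end

section
/- Let G be a simple connected graph and let G* be the graph obtained from G by replacing each edge uv by a 4-cycle u x v y u with two new vertices x, y. Then G* is bipartite, with one side of the bipartition consisting only of vertices of degree 2, and pd(G) = 1 if and only if pd(G*) = 1. -/
open SimpleGraph

variable {V : Type*}

/-- The graph obtained from `G` by replacing each edge by a 4-cycle through
two new vertices. -/
def starG {V : Type*} (G : SimpleGraph V) : SimpleGraph (V ⊕ (G.edgeSet × Bool)) :=
  SimpleGraph.fromRel (fun a b =>
    ∃ (u : V) (e : G.edgeSet) (x : Bool),
      a = Sum.inl u ∧ b = Sum.inr (e, x) ∧ u ∈ (e : Sym2 V))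


/-!
A matching cut separating `x` from `y` amounts to a vertex set `S` with `x ∈ S`, `y ∉ S` in which
every vertex has at most one neighbour on the other side. An orientation `f` of `G` gives a
projection `Sum.elim id f` of `G*` onto `G`, sending `(e, true)` to the head of `e` and
`(e, false)` to its tail; preimages of such sets of `G` are such sets of `G*`, and any two distinct
vertices of `G*` are separated by the projection of a suitable orientation. Conversely the trace
on `V` of such a set of `G*` is one for `G`: a vertex `v` with two neighbours `a`, `b` across would,
through the 4-cycles of `va` and `vb`, get two subdivision neighbours across. Finally `pd = 1`
means that the graph has an edge and all pairs are separated by matching cuts, and `G*` has an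
edge iff `G` has.
-/

def EdgeBoundaryIsMatching (H : SimpleGraph V) (S : Set V) : Prop :=
  ∀ ⦃v a b : V⦄, H.Adj v a → H.Adj v b → (a ∈ S ↔ v ∉ S) → (b ∈ S ↔ v ∉ S) → a = b

lemma SimpleGraph.Reachable.mem_iff_of_forall_adj {H : SimpleGraph V} {S : Set V} {x y : V}
    (hS : ∀ ⦃u v⦄, H.Adj u v → (u ∈ S ↔ v ∈ S)) (h : H.Reachable x y) : x ∈ S ↔ y ∈ S := by
  obtain ⟨p⟩ := h
  induction p with
  | nil => rfl
  | cons huv _ ih => exact (hS huv).trans ih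

lemma exists_isMatchingSepCut_iff {H : SimpleGraph V} {x y : V} :
    (∃ F, IsMatchingSepCut H F x y) ↔
      ∃ S : Set V, x ∈ S ∧ y ∉ S ∧ EdgeBoundaryIsMatching H S := by
  constructor
  · rintro ⟨F, ⟨-, hxy⟩, hF⟩
    set S := {v | (H.deleteEdges F).Reachable x v}
    have mem_F : ∀ ⦃v a⦄, H.Adj v a → (a ∈ S ↔ v ∉ S) → s(v, a) ∈ F := by
      intro v a hva hcross
      by_contra hvaF
      have hadj : (H.deleteEdges F).Adj v a := deleteEdges_adj.mpr ⟨hva, hvaF⟩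
      have : v ∈ S ↔ a ∈ S :=
        ⟨fun h => h.trans hadj.reachable, fun h => h.trans hadj.symm.reachable⟩
      tauto
    refine ⟨S, Reachable.refl x, hxy, fun v a b hva hvb ha hb => by_contra fun hab => ?_⟩
    exact hF _ (mem_F hva ha) _ (mem_F hvb hb)
      ⟨mt Sym2.congr_right.mp hab, v, Sym2.mem_mk_left _ _, Sym2.mem_mk_left _ _⟩
  · rintro ⟨S, hx, hy, hS⟩
    have hsymm : Std.Symm fun u v => H.Adj u v ∧ (v ∈ S ↔ u ∉ S) :=
      ⟨fun u v h => ⟨h.1.symm, by tauto⟩⟩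
    refine ⟨Sym2.fromRel hsymm, ⟨fun e he => ?_, fun hxy => hy ?_⟩, ?_⟩
    · induction e using Sym2.ind
      exact he.1
    · refine (hxy.mem_iff_of_forall_adj fun u v huv => ?_).mp hx
      rw [deleteEdges_adj, Sym2.fromRel_prop] at huv
      tauto
    · rintro e₁ he₁ e₂ he₂ ⟨hne, v, hv₁, hv₂⟩
      obtain ⟨a, rfl⟩ := Sym2.mem_iff_exists.mp hv₁
      obtain ⟨b, rfl⟩ := Sym2.mem_iff_exists.mp hv₂
      exact hne (congrArg _ (hS he₁.1 he₂.1 he₁.2 he₂.2))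

lemma pd_eq_one_iff (H : SimpleGraph V) :
    pd H = 1 ↔ H ≠ ⊥ ∧ ∀ x y, x ≠ y → ∃ F, IsMatchingSepCut H F x y := by
  rw [pd, Nat.sInf_upward_closed_eq_succ_iff ?upward 0, and_comm]
  case upward => exact fun _ _ hle ⟨c, hc, hsep⟩ => ⟨c, fun e he => (hc e he).trans_le hle, hsep⟩
  refine and_congr (not_congr ⟨fun ⟨c, hc, _⟩ => ?_, fun hH => ⟨0, ?_, fun x y hxy => ?_⟩⟩)
    ⟨fun ⟨c, hc, hsep⟩ x y hxy => ?_, fun h => ⟨0, fun _ _ => zero_lt_one, fun x y hxy => ?_⟩⟩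
  · exact edgeSet_eq_empty.mp
      (Set.eq_empty_of_forall_notMem fun e he => Nat.not_lt_zero _ (hc e he))
  · simp [hH]
  · refine ⟨∅, ⟨Set.empty_subset _, ?_⟩, by simp⟩
    rwa [deleteEdges_empty, hH, reachable_bot]
  · obtain ⟨F, hcut, hproper⟩ := hsep x y hxy
    refine ⟨F, hcut, fun e₁ he₁ e₂ he₂ hadj => hproper e₁ he₁ e₂ he₂ hadj ?_⟩
    rw [Nat.lt_one_iff.mp (hc e₁ (hcut.1 he₁)), Nat.lt_one_iff.mp (hc e₂ (hcut.1 he₂))]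
  · obtain ⟨F, hcut, hmatch⟩ := h x y hxy
    exact ⟨F, hcut, fun e₁ he₁ e₂ he₂ hadj => (hmatch e₁ he₁ e₂ he₂ hadj).elim⟩

section StarGraph

variable {G : SimpleGraph V}

@[simp] lemma starG_adj_inl_inl {u v : V} : ¬ (starG G).Adj (Sum.inl u) (Sum.inl v) := by
  simp [starG]

@[simp] lemma starG_adj_inr_inr {w w' : G.edgeSet × Bool} :
    ¬ (starG G).Adj (Sum.inr w) (Sum.inr w') := by
  simp [starG]

@[simp] lemma starG_adj_inl_inr {u : V} {w : G.edgeSet × Bool} :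
    (starG G).Adj (Sum.inl u) (Sum.inr w) ↔ u ∈ (w.1 : Sym2 V) := by
  obtain ⟨⟨e, he⟩, b⟩ := w
  cases b <;> simp [starG, he]

@[simp] lemma starG_adj_inr_inl {u : V} {w : G.edgeSet × Bool} :
    (starG G).Adj (Sum.inr w) (Sum.inl u) ↔ u ∈ (w.1 : Sym2 V) := by
  rw [SimpleGraph.adj_comm, starG_adj_inl_inr]

def IsOrientation (G : SimpleGraph V) (f : G.edgeSet × Bool → V) : Prop :=
  ∀ e : G.edgeSet, (e : Sym2 V) = s(f (e, true), f (e, false))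

lemma exists_isOrientation (G : SimpleGraph V) : ∃ f, IsOrientation G f := by
  have hmk : ∀ e : G.edgeSet, ∃ u v, (e : Sym2 V) = s(u, v) := fun e =>
    ⟨_, _, (Quot.out_eq (e : Sym2 V)).symm⟩
  choose a b hab using hmk
  exact ⟨fun p => if p.2 then a p.1 else b p.1, hab⟩

namespace IsOrientation

variable {f : G.edgeSet × Bool → V}

lemma injective (hf : IsOrientation G f) (e : G.edgeSet) :
    Function.Injective fun b => f (e, b) := by
  have hne : f (e, true) ≠ f (e, false) :=
    G.ne_of_adj (by rw [← mem_edgeSet, ← hf e]; exact e.2)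
  intro b b' h
  cases b <;> cases b' <;> simp_all [eq_comm]

lemma eq_mk_of_ne (hf : IsOrientation G f) {e : G.edgeSet} {v : V} (b : Bool)
    (hv : v ∈ (e : Sym2 V)) (hne : f (e, b) ≠ v) : (e : Sym2 V) = s(v, f (e, b)) :=
  (Sym2.mem_and_mem_iff hne.symm).mp ⟨hv, by rw [hf e]; cases b <;> simp⟩

lemma exists_apply_ne (hf : IsOrientation G f) (e : G.edgeSet) (b : Bool) (x : V) :
    ∃ f', IsOrientation G f' ∧ f' (e, b) ≠ x ∧ ∀ e' ≠ e, ∀ c, f' (e', c) = f (e', c) := by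
  classical
  by_cases hx : f (e, b) = x
  · refine ⟨fun p => if p.1 = e then f (p.1, !p.2) else f p, fun e' => ?_, ?_,
      fun e' he' c => if_neg he'⟩
    · by_cases he' : e' = e
      · simp [he', hf e, Sym2.eq_swap]
      · simp [he', hf e']
    · simpa [← hx] using (hf.injective e).ne (Bool.not_ne_self b)
  · exact ⟨f, hf, hx, fun _ _ _ => rfl⟩

end IsOrientation

lemma exists_isOrientation_elim_ne {p q : V ⊕ (G.edgeSet × Bool)} (hpq : p ≠ q) :
    ∃ f, IsOrientation G f ∧ Sum.elim id f p ≠ Sum.elim id f q := by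
  obtain ⟨f₀, hf₀⟩ := exists_isOrientation G
  rcases p with x | ⟨e, b⟩ <;> rcases q with y | ⟨e', b'⟩
  · exact ⟨f₀, hf₀, by simpa using hpq⟩
  · obtain ⟨f, hf, hne, -⟩ := hf₀.exists_apply_ne e' b' x
    exact ⟨f, hf, hne.symm⟩
  · obtain ⟨f, hf, hne, -⟩ := hf₀.exists_apply_ne e b y
    exact ⟨f, hf, hne⟩
  · by_cases he : e = e'
    · subst he
      exact ⟨f₀, hf₀, (hf₀.injective e).ne fun hb => hpq (by rw [hb])⟩
    · obtain ⟨f, hf, hne, hf'⟩ := hf₀.exists_apply_ne e b (f₀ (e', b'))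
      exact ⟨f, hf, by simpa [hf' e' (Ne.symm he)] using hne⟩

lemma EdgeBoundaryIsMatching.preimage_elim {S : Set V} (hS : EdgeBoundaryIsMatching G S)
    {f : G.edgeSet × Bool → V} (hf : IsOrientation G f) :
    EdgeBoundaryIsMatching (starG G) (Sum.elim id f ⁻¹' S) := by
  have ne_of_cross : ∀ {u v : V}, (u ∈ S ↔ v ∉ S) → u ≠ v := by
    rintro u v h rfl
    exact iff_not_self h
  rintro (v | ⟨e, b⟩) (a₁ | ⟨e₁, b₁⟩) (a₂ | ⟨e₂, b₂⟩) h₁ h₂ hc₁ hc₂ <;>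
    simp only [starG_adj_inl_inl, starG_adj_inr_inr, starG_adj_inl_inr, starG_adj_inr_inl,
      Set.mem_preimage, Sum.elim_inl, Sum.elim_inr, id] at h₁ h₂ hc₁ hc₂ ⊢
  · have he₁ := hf.eq_mk_of_ne b₁ h₁ (ne_of_cross hc₁)
    have he₂ := hf.eq_mk_of_ne b₂ h₂ (ne_of_cross hc₂)
    have hfe : f (e₁, b₁) = f (e₂, b₂) :=
      hS (by rw [← mem_edgeSet, ← he₁]; exact e₁.2) (by rw [← mem_edgeSet, ← he₂]; exact e₂.2)
        hc₁ hc₂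
    obtain rfl : e₁ = e₂ := Subtype.ext (by rw [he₁, he₂, hfe])
    rw [hf.injective e₁ hfe]
  · have he₁ := hf.eq_mk_of_ne b h₁ (ne_of_cross hc₁).symm
    have he₂ := hf.eq_mk_of_ne b h₂ (ne_of_cross hc₂).symm
    rw [Sym2.congr_left.mp (he₁.symm.trans he₂)]

lemma EdgeBoundaryIsMatching.exists_subdivision_crossing
    {S : Set (V ⊕ (G.edgeSet × Bool))} (hS : EdgeBoundaryIsMatching (starG G) S) {v a : V}
    (hva : G.Adj v a) (hcross : Sum.inl a ∈ S ↔ Sum.inl v ∉ S) :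
    ∃ c, (Sum.inr (⟨s(v, a), hva⟩, c) ∈ S ↔ Sum.inl v ∉ S) := by
  by_contra! h
  have hcross' : ∀ c, (Sum.inr (⟨s(v, a), hva⟩, c) ∈ S ↔ Sum.inl a ∉ S) := fun c => by
    have := h c
    tauto
  have := hS (starG_adj_inl_inr.mpr (Sym2.mem_mk_right v a))
    (starG_adj_inl_inr.mpr (Sym2.mem_mk_right v a)) (hcross' false) (hcross' true)
  simp at this

lemma EdgeBoundaryIsMatching.preimage_inl {S : Set (V ⊕ (G.edgeSet × Bool))}
    (hS : EdgeBoundaryIsMatching (starG G) S) : EdgeBoundaryIsMatching G (Sum.inl ⁻¹' S) := by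
  intro v a b hva hvb ha hb
  obtain ⟨c, hc⟩ := hS.exists_subdivision_crossing hva ha
  obtain ⟨c', hc'⟩ := hS.exists_subdivision_crossing hvb hb
  have := hS (starG_adj_inl_inr.mpr (Sym2.mem_mk_left v a))
    (starG_adj_inl_inr.mpr (Sym2.mem_mk_left v b)) hc hc'
  simp only [Sum.inr.injEq, Prod.mk.injEq] at this
  exact Sym2.congr_right.mp (congrArg Subtype.val this.1)

lemma forall_exists_isMatchingSepCut_starG_iff :
    (∀ p q : V ⊕ (G.edgeSet × Bool), p ≠ q → ∃ F, IsMatchingSepCut (starG G) F p q) ↔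
      ∀ x y : V, x ≠ y → ∃ F, IsMatchingSepCut G F x y := by
  simp only [exists_isMatchingSepCut_iff]
  constructor
  · intro h x y hxy
    obtain ⟨S, hx, hy, hS⟩ := h (Sum.inl x) (Sum.inl y) (by simpa using hxy)
    exact ⟨_, hx, hy, hS.preimage_inl⟩
  · intro h p q hpq
    obtain ⟨f, hf, hne⟩ := exists_isOrientation_elim_ne hpq
    obtain ⟨S, hp, hq, hS⟩ := h _ _ hne
    exact ⟨_, hp, hq, hS.preimage_elim hf⟩

lemma starG_ne_bot_iff : starG G ≠ ⊥ ↔ G ≠ ⊥ := by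
  simp only [ne_bot_iff_exists_adj]
  constructor
  · rintro ⟨_ | ⟨⟨e, he⟩, _⟩, _ | ⟨⟨e', he'⟩, _⟩, h⟩ <;> simp at h
    · induction e' using Sym2.ind
      exact ⟨_, _, he'⟩
    · induction e using Sym2.ind
      exact ⟨_, _, he⟩
  · rintro ⟨u, v, huv⟩
    exact ⟨Sum.inl u, Sum.inr (⟨s(u, v), huv⟩, true), by simp⟩

lemma ncard_neighborSet_starG_inr (w : G.edgeSet × Bool) :
    ((starG G).neighborSet (Sum.inr w)).ncard = 2 := by
  obtain ⟨⟨e, he⟩, b⟩ := w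
  induction e using Sym2.ind with
  | h u v =>
    have hset : (starG G).neighborSet (Sum.inr (⟨s(u, v), he⟩, b)) = {Sum.inl u, Sum.inl v} := by
      ext (x | x) <;> simp [mem_neighborSet]
    rw [hset, Set.ncard_pair (by simpa using G.ne_of_adj he)]

end StarGraph

theorem stmt15_general {V : Type*} (G : SimpleGraph V) :
    (∀ a b, (starG G).Adj a b → (a.isLeft ∧ b.isRight) ∨ (a.isRight ∧ b.isLeft)) ∧
      (∀ w : G.edgeSet × Bool, ((starG G).neighborSet (Sum.inr w)).ncard = 2) ∧
      (pd G = 1 ↔ pd (starG G) = 1) := by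
  refine ⟨?_, ncard_neighborSet_starG_inr, ?_⟩
  · rintro (_ | _) (_ | _) h <;> simp_all
  · rw [pd_eq_one_iff, pd_eq_one_iff, starG_ne_bot_iff, forall_exists_isMatchingSepCut_starG_iff]

theorem stmt15 {V : Type*} (G : SimpleGraph V) (hconn : G.Connected) :
    (∀ a b, (starG G).Adj a b → (a.isLeft ∧ b.isRight) ∨ (a.isRight ∧ b.isLeft)) ∧
      (∀ w : G.edgeSet × Bool, ((starG G).neighborSet (Sum.inr w)).ncard = 2) ∧
      (pd G = 1 ↔ pd (starG G) = 1) :=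
  stmt15_general G
end

section
/- Let G be a simple connected graph and G* the graph obtained from G by replacing each edge uv by a 4-cycle through two new vertices. If every pair of distinct vertices of G* is separated by a matching cut, then every pair of distinct vertices of G is separated by a matching cut. -/
open SimpleGraph

variable {V : Type*}

theorem stmt16 {V : Type*} (G : SimpleGraph V) (hconn : G.Connected)
    (h : ∀ x y : V ⊕ (G.edgeSet × Bool), x ≠ y → ∃ F, IsMatchingSepCut (starG G) F x y) :
    ∀ x y : V, x ≠ y → ∃ F, IsMatchingSepCut G F x y := by
  intro x y hxy
  obtain ⟨F', ⟨hF'sub, hF'sep⟩, hF'match⟩ :=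
    h (Sum.inl x) (Sum.inl y) (by simpa using hxy)
  set H := (starG G).deleteEdges F' with hH
  have hstar : ∀ (u : V) (E : G.edgeSet) (b : Bool), u ∈ (E : Sym2 V) →
      (starG G).Adj (Sum.inl u) (Sum.inr (E, b)) := by
    intro u E b hu
    rw [starG, fromRel_adj]
    exact ⟨by simp, Or.inl ⟨u, E, b, rfl, rfl, hu⟩⟩
  have key : ∀ u v : V, G.Adj u v → ¬ H.Reachable (Sum.inl u) (Sum.inl v) →
      ∃ (E : G.edgeSet) (b : Bool), (E : Sym2 V) = s(u, v) ∧
        s(Sum.inl u, Sum.inr (E, b)) ∈ F' := by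
    intro u v hadj hnr
    set E : G.edgeSet := ⟨s(u, v), hadj⟩ with hE
    by_contra hcon
    push_neg at hcon
    have hu : ∀ b : Bool, s((Sum.inl u : V ⊕ (G.edgeSet × Bool)), Sum.inr (E, b)) ∉ F' :=
      fun b hb => hcon E b rfl hb
    have hv : ∀ b : Bool, s((Sum.inl v : V ⊕ (G.edgeSet × Bool)), Sum.inr (E, b)) ∈ F' := by
      intro b
      by_contra hvb
      apply hnr
      have h1 : H.Adj (Sum.inl u) (Sum.inr (E, b)) := by
        rw [hH, deleteEdges_adj]
        exact ⟨hstar u E b (by simp [hE]), hu b⟩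
      have h2 : H.Adj (Sum.inl v) (Sum.inr (E, b)) := by
        rw [hH, deleteEdges_adj]
        exact ⟨hstar v E b (by simp [hE]), hvb⟩
      exact h1.reachable.trans h2.reachable.symm
    exact hF'match _ (hv false) _ (hv true)
      ⟨by simp, Sum.inl v, by simp, by simp⟩
  have get : ∀ (u v w : V), G.Adj u v → ¬ H.Reachable (Sum.inl u) (Sum.inl v) →
      w ∈ s(u, v) → ∃ (E : G.edgeSet) (b : Bool), (E : Sym2 V) = s(u, v) ∧
        s(Sum.inl w, Sum.inr (E, b)) ∈ F' := by
    intro u v w hadj hnr hw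
    rcases Sym2.mem_iff.mp hw with rfl | rfl
    · exact key w v hadj hnr
    · obtain ⟨E, b, hEv, hmem⟩ := key w u hadj.symm (fun hr => hnr hr.symm)
      exact ⟨E, b, hEv.trans (Sym2.eq_swap), hmem⟩
  refine ⟨{e | ∃ u v : V, e = s(u, v) ∧ G.Adj u v ∧ ¬ H.Reachable (Sum.inl u) (Sum.inl v)},
    ⟨?_, ?_⟩, ?_⟩
  · rintro e ⟨u, v, rfl, hadj, -⟩
    exact hadj
  · rintro ⟨p⟩
    apply hF'sep
    have lift : ∀ {a b : V},
        (G.deleteEdges {e | ∃ u v : V, e = s(u, v) ∧ G.Adj u v ∧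
          ¬ H.Reachable (Sum.inl u) (Sum.inl v)}).Walk a b →
        H.Reachable (Sum.inl a) (Sum.inl b) := by
      intro a b p
      induction p with
      | nil => exact Reachable.refl _
      | cons hadj p ih =>
        rw [deleteEdges_adj] at hadj
        obtain ⟨hadj, hnot⟩ := hadj
        refine Reachable.trans ?_ ih
        by_contra hnr
        exact hnot ⟨_, _, rfl, hadj, hnr⟩
    exact lift p
  · rintro e₁ ⟨u₁, v₁, rfl, ha₁, hr₁⟩ e₂ ⟨u₂, v₂, rfl, ha₂, hr₂⟩ ⟨hne, w, hw₁, hw₂⟩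
    obtain ⟨E₁, b₁, hE₁, hm₁⟩ := get u₁ v₁ w ha₁ hr₁ hw₁
    obtain ⟨E₂, b₂, hE₂, hm₂⟩ := get u₂ v₂ w ha₂ hr₂ hw₂
    refine hF'match _ hm₁ _ hm₂ ⟨?_, Sum.inl w, by simp, by simp⟩
    intro hEq
    apply hne
    rw [← hE₁, ← hE₂]
    have hE : E₁ = E₂ := by
      rcases Sym2.eq_iff.mp hEq with ⟨-, h2⟩ | ⟨h1, -⟩
      · exact (Prod.ext_iff.mp (Sum.inr.inj h2)).1
      · simp at h1
    exact congrArg Subtype.val hE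
end
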